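/- arXiv:2512.12864 — 5 statements merged into one kernel-verified Lean document; each statement's English description precedes it below -/
import Mathlib

section
/- For the Riemann–Liouville kernel K(t,s) = √(2H)·(t−s)^{H−1/2} (for 0 < s < t, and 0 otherwise), with 1/2 < H < 1, the covariance R(s,t) = ∫₀^{s∧t} K(t,u)K(s,u) du of the Riemann–Liouville fractional Brownian motion satisfies, for 0 < s < t: ∂²R/∂t∂s (s,t) = 2H(H−1/2)² (t−s)^{2H−2} · B_{s/t}(H−1/2, 2−2H), where B_x(a,b) = ∫₀ˣ u^{a−1}(1−u)^{b−1} du is the incomplete beta function. -/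
/-!
Write `a = H - 1/2`. On `0 < u < s < t` the kernel product is `2H (t-u)^a (s-u)^a`. Differentiating
`u ↦ -(t-u)^a (s-u)^a (s+t-2u)` and integrating over `[0, s]` gives
`4H ∫₀ˢ (t-u)^a (s-u)^a du + a (t-s)² ∫₀ˢ (s-u)^(a-1) (t-u)^(a-1) du = s^a t^a (s+t)`,
and the decreasing substitution `v = (s-u)/(t-u)` turns the second integral into
`(t-s)^(2H-2) B_{s/t}(a, 2-2H)`. Hence
`2 R(s,t) = s^a t^a (s+t) - a (t-s)^(2H) B_{s/t}(a, 2-2H)`, which can be differentiated directly: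
`∂R/∂s = H (s^a t^a + a (t-s)^(2H-1) B_{s/t}(a, 2-2H))`, and in its `t`-derivative the
contributions of `s^a t^a` and of `B_{s/t}` cancel.
-/

open MeasureTheory Real

/-- Riemann–Liouville kernel `K(t,s) = √(2H)(t-s)^{H-1/2}` for `0 < s < t`, `0` otherwise. -/
noncomputable def K (H t s : ℝ) : ℝ :=
  if 0 < s ∧ s < t then Real.sqrt (2*H) * (t - s) ^ (H - 1/2) else 0

/-- Covariance of the Riemann–Liouville fractional Brownian motion. -/
noncomputable def R (H s t : ℝ) : ℝ := ∫ u in (0:ℝ)..(min s t), K H t u * K H s u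

/-- Incomplete beta function `B_x(a,b) = ∫₀ˣ u^{a-1}(1-u)^{b-1} du`. -/
noncomputable def incBeta (x a b : ℝ) : ℝ := ∫ u in (0:ℝ)..x, u ^ (a-1) * (1-u) ^ (b-1)

open Set

lemma K_mul_K_of_lt {H t s u : ℝ} (hH : 0 ≤ H) (hu : 0 < u) (hus : u < s) (hst : s ≤ t) :
    K H t u * K H s u = 2*H * ((t-u) ^ (H-1/2) * (s-u) ^ (H-1/2)) := by
  rw [K, K, if_pos ⟨hu, hus.trans_le hst⟩, if_pos ⟨hu, hus⟩, mul_mul_mul_comm,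
    mul_self_sqrt (by linarith)]

lemma R_eq_integral {H s t : ℝ} (hH : 0 ≤ H) (hs : 0 ≤ s) (hst : s ≤ t) :
    R H s t = 2*H * ∫ u in (0:ℝ)..s, (t-u) ^ (H-1/2) * (s-u) ^ (H-1/2) := by
  rw [R, min_eq_left hst, ← intervalIntegral.integral_const_mul]
  exact intervalIntegral.integral_congr_Ioo_of_le hs fun u hu => K_mul_K_of_lt hH hu.1 hu.2 hst

lemma div_rpow_mul_one_sub_div_rpow {p q : ℝ} (hp : 0 ≤ p) (hpq : p < q) (a b : ℝ) :
    (p/q) ^ (a-1) * (1 - p/q) ^ (b-1) = p ^ (a-1) * (q-p) ^ (b-1) / q ^ (a+b-2) := by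
  have hq : 0 < q := hp.trans_lt hpq
  rw [one_sub_div hq.ne', div_rpow hp hq.le, div_rpow (by linarith) hq.le,
    show a + b - 2 = (a-1) + (b-1) by ring, rpow_add hq]
  field_simp

lemma integral_sub_rpow_mul_sub_rpow_eq_incBeta {s t : ℝ} (hs : 0 ≤ s) (hst : s < t)
    (a b : ℝ) :
    ∫ u in (0:ℝ)..s, (s-u) ^ (a-1) * (t-u) ^ (-a-b) = (t-s) ^ (-b) * incBeta (s/t) a b := by
  have hts : 0 < t - s := by linarith
  set φ : ℝ → ℝ := fun u => (s-u)/(t-u)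
  set φ' : ℝ → ℝ := fun u => -(t-s)/(t-u)^2
  have hφ : ∀ u ∈ Icc 0 s, HasDerivAt φ (φ' u) u := by
    intro u hu
    have htu : t - u ≠ 0 := by linarith [hu.2]
    refine (((hasDerivAt_id' u).const_sub s).div ((hasDerivAt_id' u).const_sub t)
      htu).congr_deriv ?_
    simp only [φ']
    field_simp
    ring
  set g : ℝ → ℝ := fun v => v ^ (a-1) * (1-v) ^ (b-1)
  have hsubst : ∫ u in (0:ℝ)..s, (g ∘ φ) u * φ' u = -incBeta (s/t) a b := by
    rw [intervalIntegral.integral_comp_mul_deriv_of_deriv_nonpos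
      (fun u hu => (hφ u (by simpa [uIcc_of_le hs] using hu)).continuousAt.continuousWithinAt)
      (fun u hu => hφ u (Ioo_subset_Icc_self (by simpa [hs] using hu)))
      (fun u _ => div_nonpos_of_nonpos_of_nonneg (by linarith) (sq_nonneg _))]
    simp [φ, g, intervalIntegral.integral_symm 0 (s/t), incBeta]
  calc ∫ u in (0:ℝ)..s, (s-u) ^ (a-1) * (t-u) ^ (-a-b)
      = ∫ u in (0:ℝ)..s, -(t-s) ^ (-b) * ((g ∘ φ) u * φ' u) := by
        refine intervalIntegral.integral_congr_Ioo_of_le hs fun u hu => ?_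
        have hsu : 0 < s - u := by linarith [hu.2]
        have htu : 0 < t - u := by linarith [hu.2]
        simp only [Function.comp_apply, g, φ, φ']
        rw [div_rpow_mul_one_sub_div_rpow hsu.le (by linarith),
          show t - u - (s - u) = t - s by ring,
          show -a - b = -(a+b-2) - 2 by ring, rpow_sub htu, rpow_neg htu.le, rpow_neg hts.le,
          rpow_sub_one hts.ne']
        norm_cast
        field_simp
    _ = (t-s) ^ (-b) * incBeta (s/t) a b := by
        rw [intervalIntegral.integral_const_mul, hsubst]
        ring

lemma intervalIntegrable_sub_rpow_mul_sub_rpow {a s t : ℝ} (ha : 0 < a) (hs : 0 ≤ s)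
    (hst : s < t) (c : ℝ) :
    IntervalIntegrable (fun u => (s-u) ^ (a-1) * (t-u) ^ c) volume 0 s := by
  have hsing : IntervalIntegrable (fun u => (s-u) ^ (a-1)) volume 0 s := by
    simpa using ((intervalIntegral.intervalIntegrable_rpow' (a := 0) (b := s) (r := a-1)
      (by linarith)).comp_sub_left s).symm
  refine hsing.mul_continuousOn fun u hu => ?_
  rw [uIcc_of_le hs] at hu
  exact ((continuous_sub_left t).continuousAt.rpow_const
    (Or.inl (by linarith [hu.2]))).continuousWithinAt

lemma integral_sub_rpow_mul_sub_rpow_recurrence {a s t : ℝ} (ha : 0 < a) (hs : 0 ≤ s)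
    (hst : s < t) :
    (4*a+2) * (∫ u in (0:ℝ)..s, (t-u) ^ a * (s-u) ^ a)
      + a * (t-s)^2 * (∫ u in (0:ℝ)..s, (s-u) ^ (a-1) * (t-u) ^ (a-1))
      = s ^ a * t ^ a * (s+t) := by
  have hcont : Continuous fun u : ℝ => (t-u) ^ a * (s-u) ^ a :=
    ((continuous_rpow_const ha.le).comp (continuous_sub_left t)).mul
      ((continuous_rpow_const ha.le).comp (continuous_sub_left s))
  have hint₁ := hcont.intervalIntegrable (μ := volume) 0 s
  have hint₂ := intervalIntegrable_sub_rpow_mul_sub_rpow ha hs hst (a-1)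
  -- `((t-u) + (s-u))² = (t-s)² + 4 (t-u)(s-u)` produces the two terms of the derivative.
  have hderiv : ∀ u ∈ Ioo 0 s, HasDerivAt (fun u => -((t-u) ^ a * (s-u) ^ a * (s+t-2*u)))
      ((4*a+2) * ((t-u) ^ a * (s-u) ^ a) + a * (t-s)^2 * ((s-u) ^ (a-1) * (t-u) ^ (a-1))) u := by
    intro u hu
    have hsu : 0 < s - u := by linarith [hu.2]
    have htu : 0 < t - u := by linarith [hu.2]
    have h := ((((hasDerivAt_id' u).const_sub t).rpow_const (p := a) (Or.inl htu.ne')).mul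
      (((hasDerivAt_id' u).const_sub s).rpow_const (p := a) (Or.inl hsu.ne'))).mul
      (((hasDerivAt_id' u).const_mul 2).const_sub (s+t))
    simp only [Pi.mul_apply] at h
    refine h.neg.congr_deriv ?_
    rw [rpow_sub_one hsu.ne', rpow_sub_one htu.ne']
    set P := (s-u) ^ a
    set Q := (t-u) ^ a
    field_simp
    ring
  have hFTC := intervalIntegral.integral_eq_sub_of_hasDeriv_right_of_le hs
    (f := fun u => -((t-u) ^ a * (s-u) ^ a * (s+t-2*u)))
    (((hcont.mul (continuous_const.sub (continuous_const.mul continuous_id))).neg).continuousOn)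
    (fun u hu => (hderiv u hu).hasDerivWithinAt)
    ((hint₁.const_mul _).add (hint₂.const_mul _))
  rw [intervalIntegral.integral_add (hint₁.const_mul _) (hint₂.const_mul _),
    intervalIntegral.integral_const_mul, intervalIntegral.integral_const_mul] at hFTC
  rw [hFTC, sub_self, zero_rpow ha.ne', sub_zero, sub_zero]
  ring

lemma R_eq_incBeta {H s t : ℝ} (hH : 1/2 < H) (hs : 0 ≤ s) (hst : s < t) :
    R H s t = (s ^ (H-1/2) * t ^ (H-1/2) * (s+t)
      - (H-1/2) * (t-s) ^ (2*H) * incBeta (s/t) (H-1/2) (2-2*H)) / 2 := by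
  have hts : 0 < t - s := by linarith
  have hrec := integral_sub_rpow_mul_sub_rpow_recurrence (a := H-1/2) (by linarith) hs hst
  have hsubst := integral_sub_rpow_mul_sub_rpow_eq_incBeta hs hst (H-1/2) (2-2*H)
  rw [show -(H-1/2) - (2-2*H) = H-1/2-1 by ring] at hsubst
  rw [hsubst, ← mul_assoc, mul_assoc _ _ ((t-s) ^ _), ← rpow_natCast, ← rpow_add hts,
    show ((2:ℕ):ℝ) + -(2-2*H) = 2*H by push_cast; ring] at hrec
  rw [R_eq_integral (by linarith) hs hst.le]
  linear_combination hrec / 2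

lemma hasDerivAt_incBeta {a b x : ℝ} (ha : 0 < a) (hx0 : 0 < x) (hx1 : x < 1) :
    HasDerivAt (fun y => incBeta y a b) (x ^ (a-1) * (1-x) ^ (b-1)) x := by
  have hcont : ∀ u < 1, ContinuousAt (fun u : ℝ => (1-u) ^ (b-1)) u := fun u hu =>
    (continuous_sub_left 1).continuousAt.rpow_const (Or.inl (by linarith))
  refine intervalIntegral.integral_hasDerivAt_right ?_ ?_ ?_
  · refine (intervalIntegral.intervalIntegrable_rpow' (by linarith)).mul_continuousOn
      fun u hu => (hcont u ?_).continuousWithinAt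
    rw [uIcc_of_le hx0.le] at hu
    linarith [hu.2]
  · exact (Measurable.stronglyMeasurable (by fun_prop)).stronglyMeasurableAtFilter
  · exact (continuousAt_id.rpow_const (Or.inl hx0.ne')).mul (hcont x hx1)

lemma incBeta_integrand_div_eq {H s t : ℝ} (hs : 0 < s) (hst : s < t) :
    (s/t) ^ (H-1/2-1) * (1 - s/t) ^ (2-2*H-1)
      = s ^ (H-1/2) * t ^ (H-1/2) * t / (s * (t-s) ^ (2*H-1)) := by
  have ht : 0 < t := hs.trans hst
  have hts : 0 < t - s := by linarith
  rw [div_rpow_mul_one_sub_div_rpow hs.le hst, rpow_sub_one hs.ne',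
    show 2-2*H-1 = -(2*H-1) by ring, rpow_neg hts.le,
    show H-1/2 + (2-2*H) - 2 = -((H-1/2) + 1) by ring, rpow_neg ht.le, rpow_add_one ht.ne']
  field_simp

noncomputable def derivLeftR (H s t : ℝ) : ℝ :=
  H * (s ^ (H-1/2) * t ^ (H-1/2) + (H-1/2) * (t-s) ^ (2*H-1) * incBeta (s/t) (H-1/2) (2-2*H))

lemma hasDerivAt_R_left {H s t : ℝ} (hH : 1/2 < H) (hs : 0 < s) (hst : s < t) :
    HasDerivAt (fun s' => R H s' t) (derivLeftR H s t) s := by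
  have ht : 0 < t := hs.trans hst
  have hts : 0 < t - s := by linarith
  have hclosed : (fun s' => R H s' t) =ᶠ[nhds s] fun s' => (s' ^ (H-1/2) * t ^ (H-1/2) * (s'+t)
      - (H-1/2) * (t-s') ^ (2*H) * incBeta (s'/t) (H-1/2) (2-2*H)) / 2 := by
    filter_upwards [Ioo_mem_nhds hs hst] with s' hs'
    exact R_eq_incBeta hH hs'.1.le hs'.2
  refine HasDerivAt.congr_of_eventuallyEq ?_ hclosed
  have hB := (hasDerivAt_incBeta (b := 2-2*H) (by linarith : (0:ℝ) < H-1/2)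
    (div_pos hs ht) ((div_lt_one ht).mpr hst)).comp s ((hasDerivAt_id' s).div_const t)
  have h := ((((hasDerivAt_rpow_const (p := H-1/2) (Or.inl hs.ne')).mul_const (t ^ (H-1/2))).mul
    ((hasDerivAt_id' s).add_const t)).sub ((((hasDerivAt_id' s).const_sub t).rpow_const
      (p := 2*H) (Or.inl hts.ne')).const_mul (H-1/2) |>.mul hB)).div_const 2
  refine h.congr_deriv ?_
  simp only [derivLeftR, Function.comp_apply]
  rw [incBeta_integrand_div_eq hs hst, rpow_sub_one hs.ne', show 2*H = (2*H-1) + 1 by ring,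
    rpow_add_one hts.ne', show 2*H-1+1-1 = 2*H-1 by ring]
  field_simp
  ring

lemma hasDerivAt_derivLeftR {H s t : ℝ} (hH : 1/2 < H) (hs : 0 < s) (hst : s < t) :
    HasDerivAt (derivLeftR H s)
      (2*H*(H - 1/2)^2 * (t - s) ^ (2*H - 2) * incBeta (s/t) (H - 1/2) (2 - 2*H)) t := by
  have ht : 0 < t := hs.trans hst
  have hts : 0 < t - s := by linarith
  have hB := (hasDerivAt_incBeta (b := 2-2*H) (by linarith : (0:ℝ) < H-1/2)
    (div_pos hs ht) ((div_lt_one ht).mpr hst)).comp t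
    ((hasDerivAt_const t s).div (hasDerivAt_id' t) ht.ne')
  have h := ((((hasDerivAt_rpow_const (p := H-1/2) (Or.inl ht.ne')).const_mul (s ^ (H-1/2))).add
    (((((hasDerivAt_id' t).sub_const s).rpow_const (p := 2*H-1) (Or.inl hts.ne')).const_mul
      (H-1/2)).mul hB)).const_mul H)
  refine h.congr_deriv ?_
  simp only [Function.comp_apply]
  rw [incBeta_integrand_div_eq hs hst, rpow_sub_one ht.ne', show 2*H-1-1 = 2*H-2 by ring,
    show 2*H-1 = (2*H-2) + 1 by ring, rpow_add_one hts.ne']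
  field_simp
  ring

theorem stmt0_general (H s t : ℝ) (hH : 1/2 < H) (hs : 0 < s) (hst : s < t) :
    deriv (fun t' => deriv (fun s' => R H s' t') s) t
      = 2*H*(H - 1/2)^2 * (t - s) ^ (2*H - 2) * incBeta (s/t) (H - 1/2) (2 - 2*H) := by
  have hinner : (fun t' => deriv (fun s' => R H s' t') s) =ᶠ[nhds t] derivLeftR H s := by
    filter_upwards [Ioi_mem_nhds hst] with t' ht'
    exact (hasDerivAt_R_left hH hs ht').deriv
  rw [hinner.deriv_eq, (hasDerivAt_derivLeftR hH hs hst).deriv]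

theorem stmt0 (H s t : ℝ) (hH : 1/2 < H) (hH1 : H < 1) (hs : 0 < s) (hst : s < t) :
    deriv (fun t' => deriv (fun s' => R H s' t') s) t
      = 2*H*(H - 1/2)^2 * (t - s) ^ (2*H - 2) * incBeta (s/t) (H - 1/2) (2 - 2*H) :=
  stmt0_general H s t hH hs hst
end

section
/- Let 0 < α < 1/2, T > 0, and g ∈ L^p[0,T] with p > 2/(1+2α). For ε > 0 define F_ε(u) = (1/ε)∫_{u−ε}^{u} g(t)·(t+ε−u)^α dt for 0 < u < T (with g extended by zero outside [0,T]). Then ∫₀^T |F_ε(u)|² du → 0 as ε ↓ 0. -/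
/-!
Write `F_ε = g ⋆ κ_ε` with `κ_ε(s) = ε⁻¹ (ε - s)^α` on `[0, ε]`. Young's convolution inequality
with `1 + 1/2 = 1/p₀ + 1/r` gives `‖F_ε‖₂ ≤ ‖g‖_{p₀} ‖κ_ε‖_r`, and `‖κ_ε‖_r^r` is a constant times
`ε^((α - 1) r + 1)`. Taking `p₀ = min p 2` (so that `r ≥ 1`, and `g ∈ L^{p₀}` because its support
has finite measure), the exponent `(α - 1) r + 1` is positive exactly when `p₀ > 2 / (1 + 2α)`,
so `‖F_ε‖₂² = O(ε^δ)` for some `δ > 0`.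
-/

open MeasureTheory Real
open MeasureTheory.Measure
open scoped ENNReal

namespace ENNReal

theorem mul_eq_young_factorization (x y : ℝ≥0∞) {p q r : ℝ} (hp : 0 < p) (hr : 0 < r)
    (hq : 0 < q) (hqp : 1 / q ≤ 1 / p) (hqr : 1 / q ≤ 1 / r) :
    x * y = (x ^ p * y ^ r) ^ (1 / q) * (x ^ p) ^ (1 / p - 1 / q) * (y ^ r) ^ (1 / r - 1 / q) := by
  have hsplit (z : ℝ≥0∞) {s : ℝ} (hs : 0 < s) (hqs : 1 / q ≤ 1 / s) :
      z = z ^ (s * (1 / q)) * z ^ (s * (1 / s - 1 / q)) := by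
    rw [← rpow_add_of_nonneg _ _ (by positivity) (mul_nonneg hs.le (sub_nonneg.2 hqs)),
      ← mul_add, add_sub_cancel, mul_one_div_cancel hs.ne', rpow_one]
  rw [mul_rpow_of_nonneg _ _ (by positivity), ← rpow_mul, ← rpow_mul, ← rpow_mul, ← rpow_mul]
  conv_lhs => rw [hsplit x hp hqp, hsplit y hr hqr]
  ring

/-- Hölder's inequality for the three factors of `mul_eq_young_factorization`. -/
theorem lintegral_mul_rpow_le_of_young_exponents {X : Type*} [MeasurableSpace X] {μ : Measure X}
    {p q r : ℝ} (hp : 1 ≤ p) (hr : 1 ≤ r) (hq : 0 < q) (hpqr : 1 / p + 1 / r = 1 + 1 / q)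
    {f h : X → ℝ≥0∞} (hf : AEMeasurable f μ) (hh : AEMeasurable h μ) :
    (∫⁻ a, f a * h a ∂μ) ^ q ≤ (∫⁻ a, f a ^ p * h a ^ r ∂μ) *
      (∫⁻ a, f a ^ p ∂μ) ^ (q / p - 1) * (∫⁻ a, h a ^ r ∂μ) ^ (q / r - 1) := by
  have hp0 : 0 < p := by linarith
  have hr0 : 0 < r := by linarith
  have hqp : 1 / q ≤ 1 / p := by linarith [(div_le_one hr0).2 hr]
  have hqr : 1 / q ≤ 1 / r := by linarith [(div_le_one hp0).2 hp]
  have holder := lintegral_prod_norm_pow_le (μ := μ) Finset.univ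
    (f := ![fun a => f a ^ p * h a ^ r, fun a => f a ^ p, fun a => h a ^ r])
    (p := ![1 / q, 1 / p - 1 / q, 1 / r - 1 / q])
    (by
      intro i _
      fin_cases i
      · exact (hf.pow_const _).mul (hh.pow_const _)
      · exact hf.pow_const _
      · exact hh.pow_const _)
    (by
      simp only [Fin.sum_univ_three, Matrix.cons_val_zero, Matrix.cons_val_one,
        Matrix.cons_val_two, Matrix.head_cons, Matrix.tail_cons]
      linarith)
    (by
      intro i _
      fin_cases i
      · simpa using hq.le
      · simpa using hqp
      · simpa using hqr)
  simp only [Fin.prod_univ_three, Matrix.cons_val_zero, Matrix.cons_val_one, Matrix.head_cons,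
    Matrix.cons_val_two, Matrix.tail_cons] at holder
  simp_rw [← mul_eq_young_factorization _ _ hp0 hr0 hq hqp hqr] at holder
  calc (∫⁻ a, f a * h a ∂μ) ^ q
      ≤ ((∫⁻ a, f a ^ p * h a ^ r ∂μ) ^ (1 / q) * (∫⁻ a, f a ^ p ∂μ) ^ (1 / p - 1 / q) *
          (∫⁻ a, h a ^ r ∂μ) ^ (1 / r - 1 / q)) ^ q := by gcongr
    _ = _ := by
      rw [mul_rpow_of_nonneg _ _ hq.le, mul_rpow_of_nonneg _ _ hq.le, ← rpow_mul, ← rpow_mul,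
        ← rpow_mul]
      congr 2
      · rw [one_div_mul_cancel hq.ne', rpow_one]
      · field_simp
      · field_simp

end ENNReal

namespace MeasureTheory

variable {G : Type*} [AddCommGroup G] [MeasurableSpace G] [MeasurableAdd₂ G] [MeasurableNeg G]
  {μ : Measure G} [IsAddLeftInvariant μ] [SFinite μ]

theorem lintegral_lconvolution {f k : G → ℝ≥0∞} (hf : AEMeasurable f μ) (hk : AEMeasurable k μ) :
    ∫⁻ x, (f ⋆ₗ[μ] k) x ∂μ = (∫⁻ x, f x ∂μ) * ∫⁻ x, k x ∂μ := by
  simp only [lconvolution_def]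
  rw [lintegral_lintegral_swap (by fun_prop), ← lintegral_mul_const'' _ hf]
  refine lintegral_congr fun y => ?_
  rw [lintegral_const_mul'' _ (by fun_prop), lintegral_add_left_eq_self k (-y)]

variable [IsNegInvariant μ]

theorem lconvolution_rpow_le {p q r : ℝ} (hp : 1 ≤ p) (hr : 1 ≤ r) (hq : 0 < q)
    (hpqr : 1 / p + 1 / r = 1 + 1 / q) {f k : G → ℝ≥0∞}
    (hf : AEMeasurable f μ) (hk : AEMeasurable k μ) (x : G) :
    (f ⋆ₗ[μ] k) x ^ q ≤ ((fun y => f y ^ p) ⋆ₗ[μ] fun y => k y ^ r) x *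
      (∫⁻ y, f y ^ p ∂μ) ^ (q / p - 1) * (∫⁻ y, k y ^ r ∂μ) ^ (q / r - 1) := by
  have hkx : AEMeasurable (fun y => k (-y + x)) μ := by fun_prop
  have htrans : ∫⁻ y, k (-y + x) ^ r ∂μ = ∫⁻ y, k y ^ r ∂μ := by
    simp_rw [neg_add_eq_sub]
    exact lintegral_sub_left_eq_self (fun y => k y ^ r) x
  simpa only [lconvolution_def, htrans] using
    ENNReal.lintegral_mul_rpow_le_of_young_exponents hp hr hq hpqr hf hkx

theorem lintegral_lconvolution_rpow_le {p q r : ℝ} (hp : 1 ≤ p) (hr : 1 ≤ r) (hq : 0 < q)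
    (hpqr : 1 / p + 1 / r = 1 + 1 / q) {f k : G → ℝ≥0∞}
    (hf : AEMeasurable f μ) (hk : AEMeasurable k μ) :
    ∫⁻ x, (f ⋆ₗ[μ] k) x ^ q ∂μ ≤ (∫⁻ x, f x ^ p ∂μ) ^ (q / p) * (∫⁻ x, k x ^ r ∂μ) ^ (q / r) := by
  set A := ∫⁻ x, f x ^ p ∂μ
  set B := ∫⁻ x, k x ^ r ∂μ
  have hp0 : 0 < p := by linarith
  have hr0 : 0 < r := by linarith
  have hqp : 0 ≤ q / p - 1 := by
    rw [sub_nonneg, le_div_iff₀ hp0, one_mul, ← one_div_le_one_div hq hp0]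
    linarith [(div_le_one hr0).2 hr]
  have hqr : 0 ≤ q / r - 1 := by
    rw [sub_nonneg, le_div_iff₀ hr0, one_mul, ← one_div_le_one_div hq hr0]
    linarith [(div_le_one hp0).2 hp]
  calc ∫⁻ x, (f ⋆ₗ[μ] k) x ^ q ∂μ
      ≤ ∫⁻ x, ((fun y => f y ^ p) ⋆ₗ[μ] fun y => k y ^ r) x *
          A ^ (q / p - 1) * B ^ (q / r - 1) ∂μ :=
        lintegral_mono fun x => lconvolution_rpow_le hp hr hq hpqr hf hk x
    _ = A * B * A ^ (q / p - 1) * B ^ (q / r - 1) := by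
        rw [lintegral_mul_const'' _ (by fun_prop), lintegral_mul_const'' _ (by fun_prop),
          lintegral_lconvolution (by fun_prop) (by fun_prop)]
    _ = A ^ (1 + (q / p - 1)) * B ^ (1 + (q / r - 1)) := by
        rw [ENNReal.rpow_add_of_nonneg _ _ zero_le_one hqp,
          ENNReal.rpow_add_of_nonneg _ _ zero_le_one hqr, ENNReal.rpow_one, ENNReal.rpow_one]
        ring
    _ = A ^ (q / p) * B ^ (q / r) := by simp only [add_sub_cancel]

end MeasureTheory

-- `κ_ε`
noncomputable def powKernel (α ε : ℝ) : ℝ → ℝ≥0∞ :=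
  (Set.Icc 0 ε).indicator fun s => ENNReal.ofReal (ε⁻¹ * (ε - s) ^ α)

-- `F_ε`
noncomputable def slidingAverage (g : ℝ → ℝ) (α ε u : ℝ) : ℝ :=
  (1 / ε) * ∫ t in (u - ε)..u, g t * (t + ε - u) ^ α

theorem measurable_powKernel (α ε : ℝ) : Measurable (powKernel α ε) :=
  Measurable.indicator (by fun_prop) measurableSet_Icc

theorem integral_powKernel_rpow {α ε r : ℝ} (hα : 0 ≤ α) (hε : 0 < ε) (hr : 0 < r) :
    ∫ s in (0:ℝ)..ε, (ε⁻¹ * (ε - s) ^ α) ^ r = ε ^ ((α - 1) * r + 1) / (α * r + 1) := by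
  have hαr : 0 ≤ α * r := mul_nonneg hα hr.le
  have hpt : ∀ s ∈ Set.uIcc 0 ε, (ε⁻¹ * (ε - s) ^ α) ^ r = ε ^ (-r) * (ε - s) ^ (α * r) := by
    intro s hs
    rw [Set.uIcc_of_le hε.le] at hs
    have h0 : 0 ≤ ε - s := by linarith [hs.2]
    rw [mul_rpow (by positivity) (by positivity), inv_rpow hε.le, rpow_neg hε.le, ← rpow_mul h0]
  rw [intervalIntegral.integral_congr hpt, intervalIntegral.integral_const_mul,
    intervalIntegral.integral_comp_sub_left (fun s => s ^ (α * r)), sub_self, sub_zero,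
    integral_rpow (Or.inl (by linarith)), zero_rpow (by linarith), sub_zero, mul_div_assoc',
    ← rpow_add hε]
  ring_nf

theorem lintegral_powKernel_rpow {α ε r : ℝ} (hα : 0 ≤ α) (hε : 0 < ε) (hr : 0 < r) :
    ∫⁻ s, powKernel α ε s ^ r = ENNReal.ofReal (ε ^ ((α - 1) * r + 1) / (α * r + 1)) := by
  have hcont : Continuous fun s => (ε⁻¹ * (ε - s) ^ α) ^ r :=
    ((continuous_const.sub continuous_id).rpow_const fun _ => Or.inr hα).const_mul _
      |>.rpow_const fun _ => Or.inr hr.le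
  have hind : (fun s => powKernel α ε s ^ r) =
      (Set.Icc 0 ε).indicator fun s => ENNReal.ofReal ((ε⁻¹ * (ε - s) ^ α) ^ r) := by
    ext s
    by_cases hs : s ∈ Set.Icc 0 ε
    · have h0 : 0 ≤ ε - s := by linarith [hs.2]
      simp only [powKernel, Set.indicator_of_mem hs]
      rw [ENNReal.ofReal_rpow_of_nonneg (by positivity) hr.le]
    · simp [powKernel, Set.indicator_of_notMem hs, ENNReal.zero_rpow_of_pos hr]
  rw [hind, lintegral_indicator measurableSet_Icc, ← ofReal_integral_eq_lintegral_ofReal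
    hcont.integrableOn_Icc, integral_Icc_eq_integral_Ioc,
    ← intervalIntegral.integral_of_le hε.le, integral_powKernel_rpow hα hε hr]
  exact ae_restrict_of_forall_mem measurableSet_Icc fun s hs =>
    rpow_nonneg (mul_nonneg (inv_nonneg.2 hε.le) (rpow_nonneg (sub_nonneg.2 hs.2) α)) r

theorem enorm_slidingAverage_le_lconvolution (g : ℝ → ℝ) {α ε : ℝ} (hε : 0 < ε) (u : ℝ) :
    ‖slidingAverage g α ε u‖ₑ ≤ ((fun t => ‖g t‖ₑ) ⋆ₗ powKernel α ε) u := by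
  rw [slidingAverage, intervalIntegral.integral_of_le (by linarith), ← integral_const_mul]
  refine (enorm_integral_le_lintegral_enorm _).trans ?_
  refine le_trans (le_of_eq (setLIntegral_congr_fun measurableSet_Ioc fun t ht => ?_))
    (setLIntegral_le_lintegral _ _)
  have hmem : -t + u ∈ Set.Icc 0 ε := ⟨by linarith [ht.2], by linarith [ht.1]⟩
  have hpos : 0 ≤ (t + ε - u) ^ α := rpow_nonneg (by linarith [ht.1]) α
  rw [powKernel, Set.indicator_of_mem hmem, show ε - (-t + u) = t + ε - u by ring,
    one_div, mul_left_comm, enorm_mul, Real.enorm_of_nonneg (r := ε⁻¹ * _) (by positivity)]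

theorem lintegral_enorm_slidingAverage_sq_le {g : ℝ → ℝ} {α ε p r : ℝ} (hα : 0 ≤ α)
    (hε : 0 < ε) (hp : 1 ≤ p) (hr : 1 ≤ r) (hpr : 1 / p + 1 / r = 1 + 1 / 2)
    (hg : AEStronglyMeasurable g) :
    ∫⁻ u, ‖slidingAverage g α ε u‖ₑ ^ (2 : ℝ) ≤
      (∫⁻ t, ‖g t‖ₑ ^ p) ^ (2 / p) *
        ENNReal.ofReal (ε ^ ((α - 1) * r + 1) / (α * r + 1)) ^ (2 / r) := by
  rw [← lintegral_powKernel_rpow hα hε (by linarith)]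
  calc _ ≤ ∫⁻ u, ((fun t => ‖g t‖ₑ) ⋆ₗ powKernel α ε) u ^ (2 : ℝ) :=
        lintegral_mono fun u => by
          gcongr
          exact enorm_slidingAverage_le_lconvolution g hε u
    _ ≤ _ := lintegral_lconvolution_rpow_le hp hr two_pos hpr hg.enorm
        (measurable_powKernel α ε).aemeasurable

theorem integral_le_toReal_of_lintegral_enorm_le {X : Type*} [MeasurableSpace X] {μ : Measure X}
    {f : X → ℝ} {M : ℝ≥0∞} (hM : M ≠ ⊤) (h : ∫⁻ x, ‖f x‖ₑ ∂μ ≤ M) : ∫ x, f x ∂μ ≤ M.toReal :=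
  (le_abs_self _).trans <| by
    rw [← Real.norm_eq_abs, ← toReal_enorm]
    exact ENNReal.toReal_mono hM ((enorm_integral_le_lintegral_enorm f).trans h)

theorem integral_slidingAverage_sq_le {g : ℝ → ℝ} {α ε p r T : ℝ} (hα : 0 ≤ α) (hε : 0 < ε)
    (hT : 0 ≤ T) (hp : 1 ≤ p) (hr : 1 ≤ r) (hpr : 1 / p + 1 / r = 1 + 1 / 2)
    (hg : AEStronglyMeasurable g) (hgp : ∫⁻ t, ‖g t‖ₑ ^ p ≠ ⊤) :
    ∫ u in (0:ℝ)..T, slidingAverage g α ε u ^ 2 ≤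
      (∫⁻ t, ‖g t‖ₑ ^ p).toReal ^ (2 / p) * (ε ^ ((α - 1) * r + 1) / (α * r + 1)) ^ (2 / r) := by
  have hαr : 0 < α * r + 1 := by nlinarith
  rw [intervalIntegral.integral_of_le hT]
  refine (integral_le_toReal_of_lintegral_enorm_le (M := (∫⁻ t, ‖g t‖ₑ ^ p) ^ (2 / p) *
    ENNReal.ofReal (ε ^ ((α - 1) * r + 1) / (α * r + 1)) ^ (2 / r)) ?_ ?_).trans_eq ?_
  · exact ENNReal.mul_ne_top (ENNReal.rpow_ne_top_of_nonneg (by positivity) hgp)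
      (ENNReal.rpow_ne_top_of_nonneg (by positivity) ENNReal.ofReal_ne_top)
  · refine (setLIntegral_le_lintegral _ _).trans (le_of_eq_of_le ?_
      (lintegral_enorm_slidingAverage_sq_le hα hε hp hr hpr hg))
    simp_rw [enorm_pow, ENNReal.rpow_two]
  · rw [ENNReal.toReal_mul, ← ENNReal.toReal_rpow, ← ENNReal.toReal_rpow,
      ENNReal.toReal_ofReal (by positivity)]

theorem exists_young_exponents {α p : ℝ} (hα0 : 0 < α) (hα : α < 1 / 2)
    (hp : 2 / (1 + 2 * α) < p) :
    ∃ p₀ r : ℝ, 1 ≤ p₀ ∧ p₀ ≤ p ∧ 1 ≤ r ∧ 1 / p₀ + 1 / r = 1 + 1 / 2 ∧ 0 < (α - 1) * r + 1 := by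
  have h2α : 0 < 1 + 2 * α := by linarith
  have hp₀gt : 2 / (1 + 2 * α) < min p 2 := lt_min hp (by rw [div_lt_iff₀ h2α]; linarith)
  have hp₀gt1 : 1 < min p 2 := lt_trans (by rw [lt_div_iff₀ h2α]; linarith) hp₀gt
  have hhalf : 1 / 2 ≤ 1 / min p 2 := one_div_le_one_div_of_le (by linarith) (min_le_right _ _)
  have hlt : 1 / min p 2 < α + 1 / 2 := by
    rw [div_lt_iff₀ (by linarith)]
    rw [div_lt_iff₀ h2α] at hp₀gt
    linarith
  have hlt1 : 1 / min p 2 < 1 := by rw [div_lt_one (by linarith)]; exact hp₀gt1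
  refine ⟨min p 2, (3 / 2 - 1 / min p 2)⁻¹, hp₀gt1.le, min_le_left _ _, ?_, ?_, ?_⟩
  · rw [one_le_inv₀ (by linarith)]; linarith
  · rw [one_div (_⁻¹), inv_inv]; ring
  · rw [← div_eq_mul_inv, div_add_one (by linarith), lt_div_iff₀ (by linarith)]
    linarith

theorem stmt3 (α T p : ℝ) (g : ℝ → ℝ) (hα0 : 0 < α) (hα : α < 1/2) (hT : 0 < T)
    (hp : 2/(1+2*α) < p)
    (hsupp : ∀ t, t ∉ Set.Icc (0:ℝ) T → g t = 0)
    (hg : MemLp g (ENNReal.ofReal p) volume) :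
    Filter.Tendsto
      (fun ε => ∫ u in (0:ℝ)..T, ((1/ε) * ∫ t in (u-ε)..u, g t * (t + ε - u) ^ α)^2)
      (nhdsWithin 0 (Set.Ioi 0)) (nhds 0) := by
  obtain ⟨p₀, r, hp₀, hp₀p, hr, hpr, hδ⟩ := exists_young_exponents hα0 hα hp
  have hgp₀ : ∫⁻ t, ‖g t‖ₑ ^ p₀ ≠ ⊤ := by
    have hg₀ := hg.mono_exponent_of_measure_support_ne_top hsupp (by simp)
      (ENNReal.ofReal_le_ofReal hp₀p)
    simpa [ENNReal.toReal_ofReal (by linarith : 0 ≤ p₀)] using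
      (lintegral_rpow_enorm_lt_top_of_eLpNorm_lt_top (by simp; linarith) ENNReal.ofReal_ne_top
        hg₀.2).ne
  have hbound : Filter.Tendsto (fun ε => (∫⁻ t, ‖g t‖ₑ ^ p₀).toReal ^ (2 / p₀) *
      (ε ^ ((α - 1) * r + 1) / (α * r + 1)) ^ (2 / r)) (nhdsWithin 0 (Set.Ioi 0)) (nhds 0) := by
    have hcont : Continuous fun ε => (∫⁻ t, ‖g t‖ₑ ^ p₀).toReal ^ (2 / p₀) *
        (ε ^ ((α - 1) * r + 1) / (α * r + 1)) ^ (2 / r) :=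
      continuous_const.mul (((continuous_rpow_const hδ.le).div_const _).rpow_const
        fun _ => Or.inr (by positivity))
    simpa [zero_rpow hδ.ne', zero_rpow (by positivity : 2 / r ≠ 0)] using
      (hcont.tendsto 0).mono_left nhdsWithin_le_nhds
  refine squeeze_zero' ?_ ?_ hbound
  · exact Filter.Eventually.of_forall fun ε =>
      intervalIntegral.integral_nonneg hT.le fun u _ => sq_nonneg _
  · filter_upwards [self_mem_nhdsWithin] with ε hε
    exact integral_slidingAverage_sq_le hα0.le hε hT.le hp₀ hr hpr hg.aestronglyMeasurable hgp₀
end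

section
/- Let 1/2 < H < 1 and 1 ≤ q < 2/(3/2 − H). Then ∫_{[0,T]²} ∫₀^{x₁∧x₂} (∫₀^r (x₁−s)^{q(H−1)}(x₂−s)^{q(H−3/2)} ds) dr dx₁ dx₂ < ∞ (for q ≥ 2), and the analogous integral with the inner integral replaced by (∫₀^r (x₁−s)^{2(H−1)}(x₂−s)^{2(H−3)} ds)^{q/2} is finite for 1 ≤ q ≤ 2; in particular the uniform bounds on 𝐃^ε are integrable over the simplex. -/
open MeasureTheory Real Set
open scoped ENNReal

/-!
Both integrals are dominated by a constant times the model integral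
`∫∫∫_{0 < r < x₁ ∧ x₂ ≤ T} (x₁ - r)^α (x₂ - r)^β`, which is finite for `α, β > -1`: extending the
integrand by zero, Tonelli and translation invariance factor it into `∫₀ᵀ y^α dy · ∫₀ᵀ y^β dy`.

For the domination, with `a, b ≤ 0` and `s < r`: `(x₁ - s)^a ≤ (x₁ - r)^a`, and
`(x₂ - r)(r - s) ≤ (x₂ - s)²` gives `(x₂ - s)^b ≤ (x₂ - r)^(b/2) (r - s)^(b/2)`; the factor
`(r - s)^(b/2)` integrates over `s ∈ (0, r)` to at most a constant once `b > -2`. For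
`a = q(H - 1)`, `b = q(H - 3/2)` (resp. `a = 2(H - 1)`, `b = 2H - 3`, then raised to the power `q/2`)
the bound `q < 2/(3/2 - H)` is what puts the exponents `α`, `β` above `-1`.
-/

lemma sub_rpow_le_mul_sub_rpow_half {x r s b : ℝ} (hs : s < r) (hr : r < x) (hb : b ≤ 0) :
    (x - s) ^ b ≤ (x - r) ^ (b / 2) * (r - s) ^ (b / 2) := by
  have hgm : (x - r) * (r - s) ≤ (x - s) ^ (2 : ℝ) := by
    rw [rpow_two]; nlinarith [sq_nonneg (x - 2 * r + s)]
  calc (x - s) ^ b = ((x - s) ^ (2 : ℝ)) ^ (b / 2) := by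
        rw [← rpow_mul (by linarith)]; ring_nf
    _ ≤ ((x - r) * (r - s)) ^ (b / 2) :=
        rpow_le_rpow_of_nonpos (mul_pos (by linarith) (by linarith)) hgm (by linarith)
    _ = (x - r) ^ (b / 2) * (r - s) ^ (b / 2) := mul_rpow (by linarith) (by linarith)

lemma lintegral_Ioo_sub_rpow_le {c r T : ℝ} (hc : -1 < c) (hr : 0 ≤ r) (hrT : r ≤ T) :
    ∫⁻ s in Ioo 0 r, ENNReal.ofReal ((r - s) ^ c) ≤ ENNReal.ofReal (T ^ (c + 1) / (c + 1)) := by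
  have hint : IntervalIntegrable (fun s => (r - s) ^ c) volume 0 r := by
    simpa using (intervalIntegral.intervalIntegrable_rpow' (a := r) (b := 0) hc).comp_sub_left r
  rw [← ofReal_integral_eq_lintegral_ofReal (hint.1.mono_set Ioo_subset_Ioc_self)
      ((ae_restrict_iff' measurableSet_Ioo).2 (ae_of_all _ fun s hs => rpow_nonneg
        (by linarith [hs.2]) _)),
    ← integral_Ioc_eq_integral_Ioo, ← intervalIntegral.integral_of_le hr,
    intervalIntegral.integral_comp_sub_left (fun y => y ^ c), sub_self, sub_zero,
    integral_rpow (Or.inl hc), zero_rpow (by linarith), sub_zero]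
  gcongr <;> linarith

section SubRpowMulSubRpow

variable {a b r x₁ x₂ T : ℝ}

lemma lintegral_sub_rpow_mul_sub_rpow_le (ha : a ≤ 0) (hb : -2 < b) (hb₀ : b ≤ 0) (hr : 0 ≤ r)
    (hrT : r ≤ T) (h₁ : r < x₁) (h₂ : r < x₂) :
    ∫⁻ s in Ioc 0 r, ENNReal.ofReal ((x₁ - s) ^ a * (x₂ - s) ^ b) ≤
      ENNReal.ofReal (T ^ (b / 2 + 1) / (b / 2 + 1)) *
        ENNReal.ofReal ((x₁ - r) ^ a * (x₂ - r) ^ (b / 2)) := by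
  have hK : 0 ≤ (x₁ - r) ^ a * (x₂ - r) ^ (b / 2) :=
    mul_nonneg (rpow_nonneg (by linarith) _) (rpow_nonneg (by linarith) _)
  rw [← restrict_Ioo_eq_restrict_Ioc, mul_comm]
  calc ∫⁻ s in Ioo 0 r, ENNReal.ofReal ((x₁ - s) ^ a * (x₂ - s) ^ b)
      ≤ ∫⁻ s in Ioo 0 r, ENNReal.ofReal ((x₁ - r) ^ a * (x₂ - r) ^ (b / 2)) *
          ENNReal.ofReal ((r - s) ^ (b / 2)) := by
        refine setLIntegral_mono' measurableSet_Ioo fun s ⟨hs₀, hs⟩ => ?_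
        rw [← ENNReal.ofReal_mul hK, mul_assoc]
        gcongr ENNReal.ofReal ?_
        exact mul_le_mul (rpow_le_rpow_of_nonpos (by linarith) (by linarith) ha)
          (sub_rpow_le_mul_sub_rpow_half hs h₂ hb₀) (rpow_nonneg (by linarith) _)
          (rpow_nonneg (by linarith) _)
    _ ≤ _ := by
        rw [lintegral_const_mul' _ _ ENNReal.ofReal_ne_top]
        gcongr
        exact lintegral_Ioo_sub_rpow_le (by linarith) hr hrT

lemma integral_sub_rpow_mul_sub_rpow_rpow_le {p : ℝ} (ha : a ≤ 0) (hb : -2 < b) (hb₀ : b ≤ 0)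
    (hr : 0 ≤ r) (hrT : r ≤ T) (h₁ : r < x₁) (h₂ : r < x₂) (hp : 0 ≤ p) :
    ENNReal.ofReal ((∫ s in 0..r, (x₁ - s) ^ a * (x₂ - s) ^ b) ^ p) ≤
      ENNReal.ofReal ((T ^ (b / 2 + 1) / (b / 2 + 1)) ^ p) *
        ENNReal.ofReal ((x₁ - r) ^ (a * p) * (x₂ - r) ^ (b / 2 * p)) := by
  have hC : 0 ≤ T ^ (b / 2 + 1) / (b / 2 + 1) :=
    div_nonneg (rpow_nonneg (by linarith) _) (by linarith)
  have hX : 0 ≤ x₁ - r := by linarith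
  have hY : 0 ≤ x₂ - r := by linarith
  have hnonneg : 0 ≤ ∫ s in 0..r, (x₁ - s) ^ a * (x₂ - s) ^ b :=
    intervalIntegral.integral_nonneg hr fun s hs =>
      mul_nonneg (rpow_nonneg (by linarith [hs.2]) _) (rpow_nonneg (by linarith [hs.2]) _)
  have hbound : ∫ s in 0..r, (x₁ - s) ^ a * (x₂ - s) ^ b ≤
      T ^ (b / 2 + 1) / (b / 2 + 1) * ((x₁ - r) ^ a * (x₂ - r) ^ (b / 2)) := by
    rw [intervalIntegral.integral_of_le hr, integral_eq_lintegral_of_nonneg_ae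
      ((ae_restrict_iff' measurableSet_Ioc).2 (ae_of_all _ fun s hs =>
        mul_nonneg (rpow_nonneg (by linarith [hs.2]) _) (rpow_nonneg (by linarith [hs.2]) _)))
      (by fun_prop)]
    refine ENNReal.toReal_le_of_le_ofReal (by positivity) ?_
    rw [ENNReal.ofReal_mul hC]
    exact lintegral_sub_rpow_mul_sub_rpow_le ha hb hb₀ hr hrT h₁ h₂
  rw [← ENNReal.ofReal_mul (rpow_nonneg hC _), rpow_mul hX, rpow_mul hY,
    ← mul_rpow (rpow_nonneg hX _) (rpow_nonneg hY _), ← mul_rpow hC (by positivity)]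
  gcongr

end SubRpowMulSubRpow

lemma lintegral_Ioc_Ioc_Ioo_min_le {f g : ℝ → ℝ≥0∞} (hf : Measurable f) (hg : Measurable g)
    (T : ℝ) :
    ∫⁻ x₁ in Ioc 0 T, ∫⁻ x₂ in Ioc 0 T, ∫⁻ r in Ioo 0 (min x₁ x₂), f (x₁ - r) * g (x₂ - r) ≤
      ENNReal.ofReal T * ((∫⁻ y in Ioc 0 T, f y) * ∫⁻ y in Ioc 0 T, g y) := by
  set F := (Ioc 0 T).indicator f
  set G := (Ioc 0 T).indicator g
  have hF : Measurable F := hf.indicator measurableSet_Ioc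
  have hG : Measurable G := hg.indicator measurableSet_Ioc
  have inner : ∀ x₁ ∈ Ioc 0 T, ∫⁻ x₂ in Ioc 0 T, ∫⁻ r in Ioo 0 (min x₁ x₂),
      f (x₁ - r) * g (x₂ - r) ≤ (∫⁻ y in Ioc 0 T, f y) * ∫⁻ y in Ioc 0 T, g y := by
    intro x₁ hx₁
    calc ∫⁻ x₂ in Ioc 0 T, ∫⁻ r in Ioo 0 (min x₁ x₂), f (x₁ - r) * g (x₂ - r)
        = ∫⁻ x₂ in Ioc 0 T, ∫⁻ r in Ioo 0 (min x₁ x₂), F (x₁ - r) * G (x₂ - r) := by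
          refine setLIntegral_congr_fun measurableSet_Ioc fun x₂ hx₂ => ?_
          refine setLIntegral_congr_fun measurableSet_Ioo fun r ⟨hr₀, hr⟩ => ?_
          rw [lt_min_iff] at hr
          have h₁ : x₁ - r ∈ Ioc 0 T := ⟨by linarith, by linarith [hx₁.2]⟩
          have h₂ : x₂ - r ∈ Ioc 0 T := ⟨by linarith, by linarith [hx₂.2]⟩
          simp only [F, G, indicator_of_mem h₁, indicator_of_mem h₂]
      _ ≤ ∫⁻ x₂, ∫⁻ r, F (x₁ - r) * G (x₂ - r) :=
          (setLIntegral_le_lintegral _ _).trans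
            (lintegral_mono fun _ => setLIntegral_le_lintegral _ _)
      _ = ∫⁻ r, F (x₁ - r) * ∫⁻ x₂, G (x₂ - r) := by
          rw [lintegral_lintegral_swap (by fun_prop)]
          exact lintegral_congr fun r => lintegral_const_mul _ (by fun_prop)
      _ = (∫⁻ y in Ioc 0 T, f y) * ∫⁻ y in Ioc 0 T, g y := by
          simp_rw [lintegral_sub_right_eq_self G]
          rw [lintegral_mul_const _ (by fun_prop), lintegral_sub_left_eq_self F,
            lintegral_indicator measurableSet_Ioc, lintegral_indicator measurableSet_Ioc]
  calc _ ≤ ∫⁻ _ in Ioc 0 T, (∫⁻ y in Ioc 0 T, f y) * ∫⁻ y in Ioc 0 T, g y :=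
        setLIntegral_mono' measurableSet_Ioc inner
    _ = _ := by rw [setLIntegral_const, Real.volume_Ioc, sub_zero, mul_comm]

lemma lintegral_Ioc_ofReal_rpow_lt_top {c : ℝ} (hc : -1 < c) (T : ℝ) :
    ∫⁻ y in Ioc 0 T, ENNReal.ofReal (y ^ c) < ⊤ :=
  (intervalIntegral.intervalIntegrable_rpow' hc).1.lintegral_lt_top

lemma lintegral_simplex_lt_top_of_le {φ : ℝ → ℝ → ℝ → ℝ≥0∞} {α β T : ℝ} {C : ℝ≥0∞}
    (hα : -1 < α) (hβ : -1 < β) (hC : C ≠ ⊤)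
    (hφ : ∀ x₁ ∈ Ioc 0 T, ∀ x₂ ∈ Ioc 0 T, ∀ r ∈ Ioo 0 (min x₁ x₂),
      φ x₁ x₂ r ≤ C * ENNReal.ofReal ((x₁ - r) ^ α * (x₂ - r) ^ β)) :
    ∫⁻ x₁ in Ioc 0 T, ∫⁻ x₂ in Ioc 0 T, ∫⁻ r in Ioc 0 (min x₁ x₂), φ x₁ x₂ r < ⊤ := by
  calc ∫⁻ x₁ in Ioc 0 T, ∫⁻ x₂ in Ioc 0 T, ∫⁻ r in Ioc 0 (min x₁ x₂), φ x₁ x₂ r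
      ≤ ∫⁻ x₁ in Ioc 0 T, ∫⁻ x₂ in Ioc 0 T, ∫⁻ r in Ioo 0 (min x₁ x₂),
          C * (ENNReal.ofReal ((x₁ - r) ^ α) * ENNReal.ofReal ((x₂ - r) ^ β)) := by
        refine setLIntegral_mono' measurableSet_Ioc fun x₁ hx₁ =>
          setLIntegral_mono' measurableSet_Ioc fun x₂ hx₂ => ?_
        rw [← restrict_Ioo_eq_restrict_Ioc]
        refine setLIntegral_mono' measurableSet_Ioo fun r hr => ?_
        rw [← ENNReal.ofReal_mul (rpow_nonneg (by linarith [hr.2.trans_le (min_le_left _ _)]) _)]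
        exact hφ x₁ hx₁ x₂ hx₂ r hr
    _ = C * ∫⁻ x₁ in Ioc 0 T, ∫⁻ x₂ in Ioc 0 T, ∫⁻ r in Ioo 0 (min x₁ x₂),
          ENNReal.ofReal ((x₁ - r) ^ α) * ENNReal.ofReal ((x₂ - r) ^ β) := by
        simp_rw [lintegral_const_mul' _ _ hC]
    _ ≤ C * (ENNReal.ofReal T * ((∫⁻ y in Ioc 0 T, ENNReal.ofReal (y ^ α)) *
          ∫⁻ y in Ioc 0 T, ENNReal.ofReal (y ^ β))) := by
        gcongr
        exact lintegral_Ioc_Ioc_Ioo_min_le (f := fun y => ENNReal.ofReal (y ^ α))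
          (g := fun y => ENNReal.ofReal (y ^ β)) (by fun_prop) (by fun_prop) T
    _ < ⊤ := ENNReal.mul_lt_top hC.lt_top (ENNReal.mul_lt_top ENNReal.ofReal_lt_top
        (ENNReal.mul_lt_top (lintegral_Ioc_ofReal_rpow_lt_top hα T)
          (lintegral_Ioc_ofReal_rpow_lt_top hβ T)))

theorem stmt10_general (H T q : ℝ) (hH : 1/2 < H) (hH1 : H < 1)
    (hq1 : 1 ≤ q) (hq2 : q < 2/(3/2 - H)) :
    (2 ≤ q →
      (∫⁻ x₁ in Set.Ioc (0:ℝ) T, ∫⁻ x₂ in Set.Ioc (0:ℝ) T,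
        ∫⁻ r in Set.Ioc (0:ℝ) (min x₁ x₂), ∫⁻ s in Set.Ioc (0:ℝ) r,
          ENNReal.ofReal ((x₁-s) ^ (q*(H-1)) * (x₂-s) ^ (q*(H-3/2)))) < ⊤) ∧
    (q ≤ 2 →
      (∫⁻ x₁ in Set.Ioc (0:ℝ) T, ∫⁻ x₂ in Set.Ioc (0:ℝ) T,
        ∫⁻ r in Set.Ioc (0:ℝ) (min x₁ x₂),
          ENNReal.ofReal
            ((∫ s in (0:ℝ)..r, (x₁-s) ^ (2*(H-1)) * (x₂-s) ^ (2*(H-3/2))) ^ (q/2))) < ⊤) := by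
  have hq₀ : 0 ≤ q := by linarith
  have hqH : q * (3/2 - H) < 2 := (lt_div_iff₀ (by linarith)).1 hq2
  have hH₀ : 0 ≤ q * (H - 1/2) := mul_nonneg hq₀ (by linarith)
  have hH₁ : 0 ≤ q * (1 - H) := mul_nonneg hq₀ (by linarith)
  constructor
  · rintro -
    apply lintegral_simplex_lt_top_of_le (α := q*(H-1)) (β := q*(H-3/2)/2)
      (by linarith) (by linarith) ENNReal.ofReal_ne_top
    rintro x₁ - x₂ ⟨-, hx₂⟩ r ⟨hr, hrm⟩
    rw [lt_min_iff] at hrm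
    exact lintegral_sub_rpow_mul_sub_rpow_le (by linarith) (by linarith) (by linarith) hr.le
      (hrm.2.le.trans hx₂) hrm.1 hrm.2
  · rintro -
    apply lintegral_simplex_lt_top_of_le (α := 2*(H-1)*(q/2)) (β := 2*(H-3/2)/2*(q/2))
      (by linarith) (by linarith) ENNReal.ofReal_ne_top
    rintro x₁ - x₂ ⟨-, hx₂⟩ r ⟨hr, hrm⟩
    rw [lt_min_iff] at hrm
    exact integral_sub_rpow_mul_sub_rpow_rpow_le (by linarith) (by linarith) (by linarith) hr.le
      (hrm.2.le.trans hx₂) hrm.1 hrm.2 (by linarith)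

theorem stmt10 (H T q : ℝ) (hH : 1/2 < H) (hH1 : H < 1) (hT : 0 < T)
    (hq1 : 1 ≤ q) (hq2 : q < 2/(3/2 - H)) :
    (2 ≤ q →
      (∫⁻ x₁ in Set.Ioc (0:ℝ) T, ∫⁻ x₂ in Set.Ioc (0:ℝ) T,
        ∫⁻ r in Set.Ioc (0:ℝ) (min x₁ x₂), ∫⁻ s in Set.Ioc (0:ℝ) r,
          ENNReal.ofReal ((x₁-s) ^ (q*(H-1)) * (x₂-s) ^ (q*(H-3/2)))) < ⊤) ∧
    (q ≤ 2 →
      (∫⁻ x₁ in Set.Ioc (0:ℝ) T, ∫⁻ x₂ in Set.Ioc (0:ℝ) T,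
        ∫⁻ r in Set.Ioc (0:ℝ) (min x₁ x₂),
          ENNReal.ofReal
            ((∫ s in (0:ℝ)..r, (x₁-s) ^ (2*(H-1)) * (x₂-s) ^ (2*(H-3/2))) ^ (q/2))) < ⊤) :=
  stmt10_general H T q hH hH1 hq1 hq2
end

section
/- Let 1/2 < H < 1 and 1 ≤ q < 1/(1−H). With D^ε_{r,t}B = (1/ε)∫₀^r Δ_ε K(t,u)dW_u and D_{r,t}B = ∫₀^r (∂K/∂t)(t,u)dW_u (the Nelson derivative of Riemann–Liouville fBm), one has lim_{ε↓0} ∫₀^T ∫_r^T E|D^ε_{r,t}B − D_{r,t}B|^q dt dr = 0. -/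
/-!
By the mean value theorem `Δ_ε K(t,u)/ε = ∂K/∂t(c,u)` for some `c ∈ (t, t+ε)`, and `∂K/∂t(·,u)` is
nonnegative and decreasing, so the squared error `(Δ_ε K(t,u)/ε - ∂K/∂t(t,u))²` is dominated by
`∂K/∂t(t,u)² ≍ (t-u)^{2H-3}` and tends to `0`. Hence the variance `σ_ε²(r,t)` of the centered
Gaussian `D^ε_{r,t}B - D_{r,t}B` tends to `0` and is `≲ (t-r)^{2H-2}`. Since
`E|X|^q = σ^q E|N(0,1)|^q`, the integrand is `≲ (t-r)^{q(H-1)}`, integrable on the simplex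
`0 < r < t ≤ T` because `q(1-H) < 1`, and dominated convergence (in `t`, then in `r`) concludes.
-/

open MeasureTheory Real

/-- `Δ_ε K(t,u) = (K(t+ε,u) - K(t,u)) 1_{(0,t)}(u)`. -/
noncomputable def DeltaK (H ε t u : ℝ) : ℝ :=
  if 0 < u ∧ u < t then K H (t+ε) u - K H t u else 0

/-- `∂K/∂t(t,u) = √(2H)(H-1/2)(t-u)^{H-3/2}`. -/
noncomputable def dK (H t u : ℝ) : ℝ := Real.sqrt (2*H) * (H - 1/2) * (t-u) ^ (H - 3/2)

open Filter Set Function ProbabilityTheory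
open scoped NNReal Topology

theorem measurable_parametric_intervalIntegral {α : Type*} [MeasurableSpace α] {μ : Measure ℝ}
    [SFinite μ] {f : α → ℝ → ℝ} (hf : Measurable (uncurry f)) {a b : α → ℝ}
    (ha : Measurable a) (hb : Measurable b) :
    Measurable fun x => ∫ u in a x..b x, f x u ∂μ := by
  have hIoc : ∀ a b : α → ℝ, Measurable a → Measurable b →
      Measurable fun x => ∫ u in Ioc (a x) (b x), f x u ∂μ := by
    intro a b ha hb
    have hs : MeasurableSet {p : α × ℝ | p.2 ∈ Ioc (a p.1) (b p.1)} :=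
      (measurableSet_lt (ha.comp measurable_fst) measurable_snd).inter
        (measurableSet_le measurable_snd (hb.comp measurable_fst))
    have := (hf.indicator hs).stronglyMeasurable.integral_prod_right' (ν := μ)
    convert this.measurable using 2 with x
    rw [← integral_indicator measurableSet_Ioc]
    rfl
  exact (hIoc a b ha hb).sub (hIoc b a hb ha)

theorem integral_abs_rpow_gaussianReal (q : ℝ) (v : ℝ≥0) :
    ∫ x, |x| ^ q ∂gaussianReal 0 v = (v : ℝ) ^ (q / 2) * ∫ x, |x| ^ q ∂gaussianReal 0 1 := by
  have hmap : (gaussianReal 0 1).map (√v * ·) = gaussianReal 0 v := by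
    rw [gaussianReal_map_const_mul, mul_zero, mul_one]
    congr
    exact sq_sqrt v.coe_nonneg
  have hscale : ∀ x : ℝ, |√v * x| ^ q = (v : ℝ) ^ (q / 2) * |x| ^ q := fun x => by
    rw [abs_mul, abs_of_nonneg (sqrt_nonneg _), mul_rpow (sqrt_nonneg _) (abs_nonneg x),
      sqrt_eq_rpow, ← rpow_mul v.coe_nonneg, one_div_mul_eq_div]
  rw [← hmap, integral_map (measurable_const_mul _).aemeasurable
    (measurable_abs.pow_const q).aestronglyMeasurable]
  simp_rw [hscale]
  exact integral_const_mul _ _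

theorem integral_abs_rpow_of_map_eq_gaussianReal {Ω : Type*} [MeasurableSpace Ω] {μ : Measure Ω}
    {X : Ω → ℝ} {v : ℝ≥0} (hX : μ.map X = gaussianReal 0 v) (q : ℝ) :
    ∫ ω, |X ω| ^ q ∂μ = (v : ℝ) ^ (q / 2) * ∫ x, |x| ^ q ∂gaussianReal 0 1 := by
  have hXm : AEMeasurable X μ :=
    .of_map_ne_zero (by rw [hX]; exact IsProbabilityMeasure.ne_zero _)
  rw [← integral_abs_rpow_gaussianReal, ← hX,
    integral_map hXm (measurable_abs.pow_const q).aestronglyMeasurable]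

section Kernel

variable {H ε t u : ℝ}

theorem hasDerivAt_rpow_kernel (hut : u < t) :
    HasDerivAt (fun s => √(2 * H) * (s - u) ^ (H - 1/2)) (dK H t u) t := by
  have := (((hasDerivAt_id t).sub_const u).rpow_const (p := H - 1/2)
    (Or.inl (sub_pos.2 hut).ne')).const_mul √(2 * H)
  refine this.congr_deriv ?_
  simp only [dK, id]; ring_nf

theorem DeltaK_eq (hε : 0 < ε) (hu : 0 < u) (hut : u < t) :
    DeltaK H ε t u = √(2 * H) * (t + ε - u) ^ (H - 1/2) - √(2 * H) * (t - u) ^ (H - 1/2) := by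
  rw [DeltaK, if_pos ⟨hu, hut⟩, K, K, if_pos ⟨hu, by linarith⟩, if_pos ⟨hu, hut⟩]

theorem measurable_DeltaK_div_sub_dK_sq (H ε : ℝ) :
    Measurable fun p : ℝ × ℝ => (DeltaK H ε p.1 p.2 / ε - dK H p.1 p.2) ^ 2 := by
  have hK : Measurable fun p : ℝ × ℝ => K H p.1 p.2 :=
    Measurable.ite ((measurableSet_lt measurable_const measurable_snd).inter
      (measurableSet_lt measurable_snd measurable_fst)) (by fun_prop) measurable_const
  have hΔ : Measurable fun p : ℝ × ℝ => DeltaK H ε p.1 p.2 :=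
    Measurable.ite ((measurableSet_lt measurable_const measurable_snd).inter
      (measurableSet_lt measurable_snd measurable_fst))
      ((hK.comp ((measurable_fst.add_const ε).prodMk measurable_snd)).sub hK) measurable_const
  unfold dK
  fun_prop

theorem exists_DeltaK_div_eq_dK (hε : 0 < ε) (hu : 0 < u) (hut : u < t) :
    ∃ c ∈ Ioo t (t + ε), DeltaK H ε t u / ε = dK H c u := by
  obtain ⟨c, hc, hslope⟩ := exists_hasDerivAt_eq_slope
    (fun s => √(2 * H) * (s - u) ^ (H - 1/2)) (fun s => dK H s u) (by linarith : t < t + ε)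
    (fun s hs => (hasDerivAt_rpow_kernel (hut.trans_le hs.1)).continuousAt.continuousWithinAt)
    (fun s hs => hasDerivAt_rpow_kernel (hut.trans hs.1))
  refine ⟨c, hc, ?_⟩
  rw [hslope, DeltaK_eq hε hu hut, add_sub_cancel_left]

theorem dK_nonneg (hH : 1/2 ≤ H) (hut : u ≤ t) : 0 ≤ dK H t u :=
  mul_nonneg (mul_nonneg (sqrt_nonneg _) (by linarith)) (rpow_nonneg (sub_nonneg.2 hut) _)

theorem dK_le_dK_of_le (hH : 1/2 ≤ H) (hH' : H ≤ 3/2) (hut : u < t) {t' : ℝ} (htt' : t ≤ t') :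
    dK H t' u ≤ dK H t u :=
  mul_le_mul_of_nonneg_left
    (rpow_le_rpow_of_nonpos (sub_pos.2 hut) (by linarith) (by linarith))
    (mul_nonneg (sqrt_nonneg _) (by linarith))

/-- Off `0 < u < t`, where `DeltaK` vanishes, this is an equality. -/
theorem sq_DeltaK_div_sub_dK_le (hH : 1/2 ≤ H) (hH' : H ≤ 3/2) (hε : 0 < ε) :
    (DeltaK H ε t u / ε - dK H t u) ^ 2 ≤ dK H t u ^ 2 := by
  by_cases hu : 0 < u ∧ u < t
  · obtain ⟨c, hc, hslope⟩ := exists_DeltaK_div_eq_dK hε hu.1 hu.2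
    have h0 : 0 ≤ dK H c u := dK_nonneg hH (hu.2.trans hc.1).le
    have h1 : dK H c u ≤ dK H t u := dK_le_dK_of_le hH hH' hu.2 hc.1.le
    rw [hslope]
    nlinarith
  · simp [DeltaK, hu]

theorem tendsto_DeltaK_div (hu : 0 < u) (hut : u < t) :
    Tendsto (fun ε => DeltaK H ε t u / ε) (𝓝[>] 0) (𝓝 (dK H t u)) := by
  refine ((hasDerivAt_iff_tendsto_slope_zero.1 (hasDerivAt_rpow_kernel hut)).mono_left
    (nhdsGT_le_nhdsNE 0)).congr' ?_
  filter_upwards [self_mem_nhdsWithin] with ε hε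
  rw [DeltaK_eq hε hu hut, smul_eq_mul, inv_mul_eq_div]

theorem dK_sq (hH : 0 ≤ H) (hut : u ≤ t) :
    dK H t u ^ 2 = 2 * H * (H - 1/2) ^ 2 * (t - u) ^ (2 * H - 3) := by
  rw [dK, mul_pow, mul_pow, sq_sqrt (by linarith), ← rpow_mul_natCast (sub_nonneg.2 hut)]
  ring_nf

theorem integrableOn_dK_sq {a r : ℝ} (hrt : r < t) :
    IntegrableOn (fun u => dK H t u ^ 2) (Icc a r) :=
  ContinuousOn.integrableOn_Icc fun _ hu =>
    ((((continuousAt_const.sub continuousAt_id).rpow_const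
      (Or.inl (sub_pos.2 (hu.2.trans_lt hrt)).ne')).const_mul _).pow 2).continuousWithinAt

theorem integral_dK_sq_le {r : ℝ} (hH : 0 ≤ H) (hH1 : H < 1) (hr : 0 ≤ r) (hrt : r < t) :
    ∫ u in (0:ℝ)..r, dK H t u ^ 2
      ≤ 2 * H * (H - 1/2) ^ 2 / (2 - 2 * H) * (t - r) ^ (2 * H - 2) := by
  have ht : 0 < t := hr.trans_lt hrt
  have hrpow : ∫ u in (0:ℝ)..r, (t - u) ^ (2 * H - 3)
      = ((t - r) ^ (2 * H - 2) - t ^ (2 * H - 2)) / (2 - 2 * H) := by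
    rw [intervalIntegral.integral_comp_sub_left (fun x => x ^ (2 * H - 3)), sub_zero,
      integral_rpow (Or.inr ⟨by linarith, fun h => by
        rw [uIcc_of_le (by linarith)] at h; linarith [h.1]⟩)]
    rw [div_eq_div_iff (by linarith) (by linarith)]
    ring_nf
  have ht0 : 0 ≤ t ^ (2 * H - 2) := rpow_nonneg ht.le _
  calc ∫ u in (0:ℝ)..r, dK H t u ^ 2
      = ∫ u in (0:ℝ)..r, 2 * H * (H - 1/2) ^ 2 * (t - u) ^ (2 * H - 3) :=
        intervalIntegral.integral_congr fun u hu => by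
          rw [uIcc_of_le hr] at hu
          exact dK_sq hH (hu.2.trans hrt.le)
    _ = 2 * H * (H - 1/2) ^ 2 / (2 - 2 * H) * ((t - r) ^ (2 * H - 2) - t ^ (2 * H - 2)) := by
        rw [intervalIntegral.integral_const_mul, hrpow]; ring
    _ ≤ 2 * H * (H - 1/2) ^ 2 / (2 - 2 * H) * (t - r) ^ (2 * H - 2) := by
        gcongr
        · exact div_nonneg (by positivity) (by linarith)
        · linarith

end Kernel

theorem tendsto_integral_integral_simplex {ι : Type*} {l : Filter ι} [l.IsCountablyGenerated]
    {F : ι → ℝ → ℝ → ℝ} {g : ℝ → ℝ} {T : ℝ} (hT : 0 ≤ T)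
    (hF_meas : ∀ i, Measurable (uncurry (F i)))
    (hF_le : ∀ᶠ i in l, ∀ r t, 0 < r → r < t → t ≤ T → |F i r t| ≤ g (t - r))
    (hg : IntegrableOn g (Ioc 0 T))
    (hF_lim : ∀ r t, 0 < r → r < t → t ≤ T → Tendsto (fun i => F i r t) l (𝓝 0)) :
    Tendsto (fun i => ∫ r in (0:ℝ)..T, ∫ t in r..T, F i r t) l (𝓝 0) := by
  have hg' : IntervalIntegrable g volume 0 T :=
    (intervalIntegrable_iff_integrableOn_Ioc_of_le hT).2 hg
  have hg_shift : ∀ r, 0 ≤ r → r ≤ T → IntervalIntegrable (fun t => g (t - r)) volume r T := by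
    intro r hr hrT
    have h0 : IntervalIntegrable g volume 0 (T - r) := hg'.mono_set
      (uIcc_subset_uIcc left_mem_uIcc (by rw [uIcc_of_le hT]; constructor <;> linarith))
    simpa using h0.comp_sub_right r
  have h_inner : ∀ r, 0 < r → r < T → Tendsto (fun i => ∫ t in r..T, F i r t) l (𝓝 0) := by
    intro r hr hrT
    simp only [intervalIntegral.integral_of_le hrT.le]
    simpa using tendsto_integral_filter_of_dominated_convergence (fun t => g (t - r))
      (Eventually.of_forall fun i => ((hF_meas i).comp measurable_prodMk_left).aestronglyMeasurable)
      (hF_le.mono fun i hi => (ae_restrict_iff' measurableSet_Ioc).2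
        (ae_of_all _ fun t ht => hi r t hr ht.1 ht.2))
      (hg_shift r hr.le hrT.le).1
      ((ae_restrict_iff' measurableSet_Ioc).2 (ae_of_all _ fun t ht => hF_lim r t hr ht.1 ht.2))
  have h_outer_le : ∀ᶠ i in l, ∀ r ∈ Ioc 0 T,
      ‖∫ t in r..T, F i r t‖ ≤ ∫ s in (0:ℝ)..T, |g s| := by
    filter_upwards [hF_le] with i hi r hr
    calc ‖∫ t in r..T, F i r t‖ ≤ ∫ t in r..T, |g (t - r)| :=
          intervalIntegral.norm_integral_le_of_norm_le hr.2 (ae_of_all _ fun t ht =>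
            (hi r t hr.1 ht.1 ht.2).trans (le_abs_self _)) (hg_shift r hr.1.le hr.2).abs
      _ = ∫ s in (0:ℝ)..T - r, |g s| := by
          rw [intervalIntegral.integral_comp_sub_right (fun s => |g s|), sub_self]
      _ ≤ ∫ s in (0:ℝ)..T, |g s| :=
          intervalIntegral.integral_mono_interval le_rfl (by linarith [hr.2]) (by linarith [hr.1])
            (ae_of_all _ fun _ => abs_nonneg _) hg'.abs
  simp only [intervalIntegral.integral_of_le hT]
  simpa using tendsto_integral_filter_of_dominated_convergence (fun _ => ∫ s in (0:ℝ)..T, |g s|)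
    (Eventually.of_forall fun i => (measurable_parametric_intervalIntegral (hF_meas i) measurable_id
      measurable_const).aestronglyMeasurable)
    (h_outer_le.mono fun i hi => (ae_restrict_iff' measurableSet_Ioc).2 (ae_of_all _ hi))
    (integrableOn_const measure_Ioc_lt_top.ne)
    ((ae_restrict_iff' measurableSet_Ioc).2 (ae_of_all _ fun r hr =>
      (eq_or_lt_of_le hr.2).elim (fun h => by simp [h, tendsto_const_nhds]) (h_inner r hr.1)))

theorem integral_integral_simplex_congr {F G : ℝ → ℝ → ℝ} {T : ℝ} (hT : 0 ≤ T)
    (h : ∀ r t, 0 < r → r < t → t ≤ T → F r t = G r t) :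
    ∫ r in (0:ℝ)..T, ∫ t in r..T, F r t = ∫ r in (0:ℝ)..T, ∫ t in r..T, G r t := by
  refine intervalIntegral.integral_congr_ae (ae_of_all _ fun r hr => ?_)
  rw [uIoc_of_le hT] at hr
  refine intervalIntegral.integral_congr_ae (ae_of_all _ fun t ht => ?_)
  rw [uIoc_of_le hr.2] at ht
  exact h r t hr.1 ht.1 ht.2

/-- The variance of the Wiener integral `D^ε_{r,t}B - D_{r,t}B`. -/
noncomputable def nelsonErrorVar (H ε r t : ℝ) : ℝ :=
  ∫ u in (0:ℝ)..r, (DeltaK H ε t u / ε - dK H t u) ^ 2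

section NelsonErrorVar

variable {H ε r t : ℝ}

theorem nelsonErrorVar_nonneg (hr : 0 ≤ r) : 0 ≤ nelsonErrorVar H ε r t :=
  intervalIntegral.integral_nonneg hr fun _ _ => sq_nonneg _

theorem measurable_nelsonErrorVar (H ε : ℝ) : Measurable (uncurry (nelsonErrorVar H ε)) :=
  measurable_parametric_intervalIntegral
    (f := fun (p : ℝ × ℝ) u => (DeltaK H ε p.2 u / ε - dK H p.2 u) ^ 2)
    ((measurable_DeltaK_div_sub_dK_sq H ε).comp
      ((measurable_snd.comp measurable_fst).prodMk measurable_snd))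
    measurable_const measurable_fst

theorem nelsonErrorVar_le (hH : 1/2 ≤ H) (hH1 : H < 1) (hε : 0 < ε) (hr : 0 ≤ r) (hrt : r < t) :
    nelsonErrorVar H ε r t ≤ 2 * H * (H - 1/2) ^ 2 / (2 - 2 * H) * (t - r) ^ (2 * H - 2) := by
  refine le_trans ?_ (integral_dK_sq_le (by linarith) hH1 hr hrt)
  rw [nelsonErrorVar, intervalIntegral.integral_of_le hr, intervalIntegral.integral_of_le hr]
  exact integral_mono_of_nonneg (ae_of_all _ fun _ => sq_nonneg _)
    ((integrableOn_dK_sq hrt).mono_set Ioc_subset_Icc_self)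
    (ae_of_all _ fun _ => sq_DeltaK_div_sub_dK_le hH (by linarith) hε)

theorem tendsto_nelsonErrorVar (hH : 1/2 ≤ H) (hH' : H ≤ 3/2) (hr : 0 ≤ r) (hrt : r < t) :
    Tendsto (fun ε => nelsonErrorVar H ε r t) (𝓝[>] 0) (𝓝 0) := by
  have := tendsto_integral_filter_of_dominated_convergence (μ := volume.restrict (Ioc 0 r))
    (l := 𝓝[>] 0) (F := fun ε u => (DeltaK H ε t u / ε - dK H t u) ^ 2) (fun u => dK H t u ^ 2)
    (Eventually.of_forall fun ε =>
      ((measurable_DeltaK_div_sub_dK_sq H ε).comp measurable_prodMk_left).aestronglyMeasurable)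
    (eventually_mem_nhdsWithin.mono fun ε hε => ae_of_all _ fun u => by
      rw [Real.norm_of_nonneg (sq_nonneg _)]
      exact sq_DeltaK_div_sub_dK_le hH hH' hε)
    ((integrableOn_dK_sq hrt).mono_set Ioc_subset_Icc_self)
    ((ae_restrict_iff' measurableSet_Ioc).2 (ae_of_all _ fun u hu => by
      simpa using ((tendsto_DeltaK_div hu.1 (hu.2.trans_lt hrt)).sub_const (dK H t u)).pow 2))
  simpa [nelsonErrorVar, intervalIntegral.integral_of_le hr] using this

theorem nelsonErrorVar_rpow_le (hH : 1/2 ≤ H) (hH1 : H < 1) (hε : 0 < ε) (hr : 0 ≤ r)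
    (hrt : r < t) {p : ℝ} (hp : 0 ≤ p) :
    nelsonErrorVar H ε r t ^ p
      ≤ (2 * H * (H - 1/2) ^ 2 / (2 - 2 * H)) ^ p * (t - r) ^ ((2 * H - 2) * p) := by
  have hC : 0 ≤ 2 * H * (H - 1/2) ^ 2 / (2 - 2 * H) := div_nonneg (by positivity) (by linarith)
  calc nelsonErrorVar H ε r t ^ p
      ≤ (2 * H * (H - 1/2) ^ 2 / (2 - 2 * H) * (t - r) ^ (2 * H - 2)) ^ p :=
        rpow_le_rpow (nelsonErrorVar_nonneg hr) (nelsonErrorVar_le hH hH1 hε hr hrt) hp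
    _ = (2 * H * (H - 1/2) ^ 2 / (2 - 2 * H)) ^ p * (t - r) ^ ((2 * H - 2) * p) := by
        rw [mul_rpow hC (rpow_nonneg (by linarith) _), ← rpow_mul (by linarith)]

theorem tendsto_integral_integral_nelsonErrorVar_rpow {T p : ℝ} (hH : 1/2 ≤ H) (hH1 : H < 1)
    (hT : 0 ≤ T) (hp : 0 < p) (hHp : -1 < (2 * H - 2) * p) :
    Tendsto (fun ε => ∫ r in (0:ℝ)..T, ∫ t in r..T, nelsonErrorVar H ε r t ^ p) (𝓝[>] 0) (𝓝 0) :=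
  tendsto_integral_integral_simplex hT
    (g := fun s => (2 * H * (H - 1/2) ^ 2 / (2 - 2 * H)) ^ p * s ^ ((2 * H - 2) * p))
    (fun ε => (measurable_nelsonErrorVar H ε).pow_const _)
    (eventually_mem_nhdsWithin.mono fun ε hε r t hr hrt _ => by
      rw [abs_of_nonneg (rpow_nonneg (nelsonErrorVar_nonneg hr.le) _)]
      exact nelsonErrorVar_rpow_le hH hH1 hε hr.le hrt hp.le)
    ((intervalIntegral.intervalIntegrable_rpow' hHp).const_mul _).1
    (fun r t hr hrt _ => by
      simpa [zero_rpow hp.ne'] using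
        (tendsto_nelsonErrorVar hH (by linarith) hr.le hrt).rpow_const (p := p) (Or.inr hp.le))

end NelsonErrorVar

/-- `Δ ε r t` stands for `D^ε_{r,t}B - D_{r,t}B`; being a Wiener integral it is centered Gaussian
with variance `∫₀^r (Δ_ε K(t,u)/ε - ∂K/∂t(t,u))² du` (hypothesis `hGauss`). -/
theorem stmt11_general {Ω : Type*} [MeasurableSpace Ω] (μ : Measure Ω)
    (H T q : ℝ) (hH : 1/2 < H) (hH1 : H < 1) (hT : 0 < T)
    (hq1 : 1 ≤ q) (hq2 : q < 1/(1-H))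
    (Δ : ℝ → ℝ → ℝ → Ω → ℝ)
    (hGauss : ∀ ε > (0:ℝ), ∀ r t : ℝ, 0 < r → r < t → t ≤ T →
      Measure.map (Δ ε r t) μ = ProbabilityTheory.gaussianReal 0
        (Real.toNNReal (∫ u in (0:ℝ)..r, (DeltaK H ε t u / ε - dK H t u)^2))) :
    Filter.Tendsto
      (fun ε => ∫ r in (0:ℝ)..T, ∫ t in r..T, ∫ ω, |Δ ε r t ω| ^ q ∂μ)
      (nhdsWithin 0 (Set.Ioi 0)) (nhds 0) := by
  have hHq : -1 < (2 * H - 2) * (q / 2) := by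
    have := (lt_div_iff₀ (by linarith : 0 < 1 - H)).1 hq2
    linarith
  set M := ∫ x, |x| ^ q ∂gaussianReal 0 1
  have hmoment : ∀ ε > (0:ℝ), ∀ r t, 0 < r → r < t → t ≤ T →
      M * nelsonErrorVar H ε r t ^ (q / 2) = ∫ ω, |Δ ε r t ω| ^ q ∂μ := by
    intro ε hε r t hr hrt htT
    have hv : 0 ≤ ∫ u in (0:ℝ)..r, (DeltaK H ε t u / ε - dK H t u) ^ 2 :=
      nelsonErrorVar_nonneg hr.le
    rw [integral_abs_rpow_of_map_eq_gaussianReal (hGauss ε hε r t hr hrt htT),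
      Real.coe_toNNReal _ hv, mul_comm]
    rfl
  have hlim := (tendsto_integral_integral_nelsonErrorVar_rpow hH.le hH1 hT.le
    (by linarith : 0 < q / 2) hHq).const_mul M
  rw [mul_zero] at hlim
  refine hlim.congr' (eventually_mem_nhdsWithin.mono fun ε hε => ?_)
  simp only [← intervalIntegral.integral_const_mul]
  exact integral_integral_simplex_congr hT.le (hmoment ε hε)

/-- `Δ ε r t` stands for `D^ε_{r,t}B - D_{r,t}B`, the difference of the approximate and exact
Nelson derivatives; being a Wiener integral it is centered Gaussian with variance
`∫₀^r (Δ_ε K(t,u)/ε - ∂K/∂t(t,u))² du` (hypothesis `hGauss`).  The conclusion is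
`∫₀ᵀ ∫_r^T E|D^ε_{r,t}B - D_{r,t}B|^q dt dr → 0` as `ε ↓ 0` for `1 ≤ q < 1/(1-H)`. -/
theorem stmt11 {Ω : Type*} [MeasurableSpace Ω] (μ : Measure Ω) [IsProbabilityMeasure μ]
    (H T q : ℝ) (hH : 1/2 < H) (hH1 : H < 1) (hT : 0 < T)
    (hq1 : 1 ≤ q) (hq2 : q < 1/(1-H))
    (Δ : ℝ → ℝ → ℝ → Ω → ℝ)
    (hGauss : ∀ ε > (0:ℝ), ∀ r t : ℝ, 0 < r → r < t → t ≤ T →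
      Measure.map (Δ ε r t) μ = ProbabilityTheory.gaussianReal 0
        (Real.toNNReal (∫ u in (0:ℝ)..r, (DeltaK H ε t u / ε - dK H t u)^2))) :
    Filter.Tendsto
      (fun ε => ∫ r in (0:ℝ)..T, ∫ t in r..T, ∫ ω, |Δ ε r t ω| ^ q ∂μ)
      (nhdsWithin 0 (Set.Ioi 0)) (nhds 0) :=
  stmt11_general μ H T q hH hH1 hT hq1 hq2 Δ hGauss
end

section
/- The Nelson derivative of the Riemann–Liouville fBm exists off the diagonal: for 0 < r < t, the limit D_{r,t}B := lim_{ε↓0} (1/ε)E[B_{t+ε} − B_t | F_r] exists in L²(Ω) and equals ∫₀^r (∂K/∂t)(t,u) dW_u, a Gaussian random variable with variance 2H(H−1/2)² ∫₀^r (t−u)^{2H−3} du. -/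
/-!
For `0 < u ≤ r < t`, Taylor's formula for `x ↦ x^{H-1/2}`, whose second derivative is bounded on
`[t - r, ∞)`, shows that `(K(t+ε,u) - K(t,u))/ε - ∂K/∂t(t,u) = O(ε)` uniformly in `u`. By the Itô
isometry the `L²(Ω)` error of the Nelson difference quotient is the `L²(0,r)` norm of this
remainder, hence `O(ε)`. The limit is a Wiener integral, so it is Gaussian with variance
`∫₀^r (∂K/∂t)(t,u)² du`.
-/

open MeasureTheory Real

open ProbabilityTheory Set Filter Topology
open scoped NNReal

lemma abs_rpow_sub_rpow_le {m a b q : ℝ} (hm : 0 < m) (hma : m ≤ a) (hab : a ≤ b)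
    (hq : q ≤ 1) :
    |b ^ q - a ^ q| ≤ |q| * m ^ (q - 1) * (b - a) := by
  have hpos : ∀ x ∈ Icc a b, 0 < x := fun x hx => hm.trans_le (hma.trans hx.1)
  simpa [Real.norm_eq_abs, abs_of_nonneg (sub_nonneg.2 hab)] using
    (convex_Icc a b).norm_image_sub_le_of_norm_hasDerivWithin_le
      (f := fun x => x ^ q) (C := |q| * m ^ (q - 1))
      (fun x hx => (hasDerivAt_rpow_const (Or.inl (hpos x hx).ne')).hasDerivWithinAt)
      (fun x hx => by
        rw [Real.norm_eq_abs, abs_mul, abs_of_pos (rpow_pos_of_pos (hpos x hx) _)]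
        exact mul_le_mul_of_nonneg_left
          (rpow_le_rpow_of_nonpos hm (hma.trans hx.1) (by linarith)) (abs_nonneg q))
      (left_mem_Icc.2 hab) (right_mem_Icc.2 hab)

lemma abs_sub_sub_mul_deriv_le {f f' : ℝ → ℝ} {a ε C : ℝ} (hε : 0 ≤ ε)
    (hf : ∀ x ∈ Icc a (a + ε), HasDerivAt f (f' x) x)
    (hf' : ∀ x ∈ Icc a (a + ε), |f' x - f' a| ≤ C) :
    |f (a + ε) - f a - ε * f' a| ≤ C * ε := by
  have key := (convex_Icc a (a + ε)).norm_image_sub_le_of_norm_hasDerivWithin_le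
    (f := fun x => f x - f' a * x) (C := C)
    (fun x hx => ((hf x hx).sub ((hasDerivAt_id x).const_mul (f' a))).hasDerivWithinAt
      |>.congr_deriv (by ring))
    hf' (left_mem_Icc.2 (by linarith)) (right_mem_Icc.2 (by linarith))
  calc |f (a + ε) - f a - ε * f' a|
      = ‖(f (a + ε) - f' a * (a + ε)) - (f a - f' a * a)‖ := by
        rw [Real.norm_eq_abs]; ring_nf
    _ ≤ C * ‖a + ε - a‖ := key
    _ = C * ε := by rw [add_sub_cancel_left, Real.norm_of_nonneg hε]

lemma abs_rpow_add_sub_rpow_sub_le {m a p ε : ℝ} (hm : 0 < m) (hma : m ≤ a) (hp0 : 0 ≤ p)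
    (hp1 : p ≤ 1) (hε : 0 ≤ ε) :
    |(a + ε) ^ p - a ^ p - ε * (p * a ^ (p - 1))| ≤ p * (1 - p) * m ^ (p - 2) * ε ^ 2 := by
  have hpos : ∀ x ∈ Icc a (a + ε), 0 < x := fun x hx => hm.trans_le (hma.trans hx.1)
  have h := abs_sub_sub_mul_deriv_le (f := fun x => x ^ p)
    (C := p * (1 - p) * m ^ (p - 2) * ε) hε
    (fun x hx => hasDerivAt_rpow_const (Or.inl (hpos x hx).ne'))
    (fun x hx => by
      have hlip := abs_rpow_sub_rpow_le hm hma hx.1 (q := p - 1) (by linarith)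
      rw [abs_of_nonpos (by linarith : p - 1 ≤ 0), show p - 1 - 1 = p - 2 by ring] at hlip
      rw [← mul_sub, abs_mul, abs_of_nonneg hp0]
      calc p * |x ^ (p - 1) - a ^ (p - 1)| ≤ p * (-(p - 1) * m ^ (p - 2) * (x - a)) := by gcongr
        _ ≤ p * (-(p - 1) * m ^ (p - 2) * ε) := by
          gcongr
          · exact mul_nonneg (by linarith) (rpow_nonneg hm.le _)
          · linarith [hx.2]
        _ = p * (1 - p) * m ^ (p - 2) * ε := by ring)
  simpa [mul_assoc, sq] using h

lemma eLpNorm_two_id_gaussianReal (v : ℝ≥0) :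
    eLpNorm id 2 (gaussianReal 0 v) = ENNReal.ofReal √v := by
  have hvar : ∫ x, x ^ 2 ∂gaussianReal 0 v = v := by
    simpa using (variance_of_integral_eq_zero aemeasurable_id integral_id_gaussianReal).symm.trans
      variance_id_gaussianReal
  rw [(memLp_id_gaussianReal 2).eLpNorm_eq_integral_rpow_norm two_ne_zero ENNReal.ofNat_ne_top]
  simp [hvar, Real.sqrt_eq_rpow]

lemma eLpNorm_two_of_map_eq_gaussianReal {Ω : Type*} {mΩ : MeasurableSpace Ω} {μ : Measure Ω}
    {X : Ω → ℝ} {v : ℝ≥0} (hX : μ.map X = gaussianReal 0 v) :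
    eLpNorm X 2 μ = ENNReal.ofReal √v := by
  have hXm : AEMeasurable X μ :=
    .of_map_ne_zero (by rw [hX]; exact IsProbabilityMeasure.ne_zero _)
  rw [← eLpNorm_two_id_gaussianReal, ← hX, eLpNorm_map_measure aestronglyMeasurable_id hXm]
  rfl

/-- The Itô isometry. -/
lemma eLpNorm_mul_sub_eq_of_gaussian {Ω : Type*} {mΩ : MeasurableSpace Ω} {μ : Measure Ω}
    {I : (ℝ → ℝ) → Ω → ℝ}
    (hLaw : ∀ f : ℝ → ℝ, Integrable (fun u => (f u)^2) →
      Measure.map (I f) μ = gaussianReal 0 (Real.toNNReal (∫ u, (f u)^2)))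
    (hLin : ∀ (c : ℝ) (f g : ℝ → ℝ),
      I (fun u => c * f u - g u) =ᵐ[μ] fun ω => c * I f ω - I g ω)
    (c : ℝ) {f g : ℝ → ℝ} (hfg : Integrable fun u => (c * f u - g u) ^ 2) :
    eLpNorm (fun ω => c * I f ω - I g ω) 2 μ = ENNReal.ofReal √(∫ u, (c * f u - g u) ^ 2) := by
  rw [← eLpNorm_congr_ae (hLin c f g), eLpNorm_two_of_map_eq_gaussianReal (hLaw _ hfg),
    Real.coe_toNNReal _ (integral_nonneg fun u => sq_nonneg _)]

section SquareIntegral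

lemma sq_indicator {α : Type*} (s : Set α) (g : α → ℝ) :
    (fun x => (s.indicator g x) ^ 2) = s.indicator fun x => g x ^ 2 := by
  funext x
  by_cases hx : x ∈ s <;> simp [hx]

lemma indicator_mul_sub_indicator {α : Type*} (s : Set α) (c : ℝ) (f g : α → ℝ) (x : α) :
    c * s.indicator f x - s.indicator g x = s.indicator (fun x => c * f x - g x) x := by
  by_cases hx : x ∈ s <;> simp [hx]

variable {α : Type*} [MeasurableSpace α] {μ : Measure α} {s : Set α} {g : α → ℝ} {c : ℝ}

lemma integrable_sq_indicator_of_abs_le (hs : MeasurableSet s) (hμs : μ s ≠ ⊤)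
    (hg : AEStronglyMeasurable g μ) (hgc : ∀ x ∈ s, |g x| ≤ c) :
    Integrable (fun x => (s.indicator g x) ^ 2) μ := by
  rw [sq_indicator]
  refine (integrable_indicator_iff hs).2
    (Measure.integrableOn_of_bounded hμs (hg.pow 2) (M := c ^ 2) ?_)
  filter_upwards [ae_restrict_mem hs] with x hx
  simpa using sq_le_sq' (abs_le.1 (hgc x hx)).1 (abs_le.1 (hgc x hx)).2

lemma integral_sq_indicator_le (hs : MeasurableSet s) (hμs : μ s ≠ ⊤)
    (hgc : ∀ x ∈ s, |g x| ≤ c) :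
    ∫ x, (s.indicator g x) ^ 2 ∂μ ≤ c ^ 2 * μ.real s := by
  have hbound : ∀ x, (s.indicator g x) ^ 2 ≤ s.indicator (fun _ => c ^ 2) x := by
    intro x
    by_cases hx : x ∈ s
    · simpa [hx] using sq_le_sq' (abs_le.1 (hgc x hx)).1 (abs_le.1 (hgc x hx)).2
    · simp [hx]
  calc ∫ x, (s.indicator g x) ^ 2 ∂μ ≤ ∫ x, s.indicator (fun _ => c ^ 2) x ∂μ :=
        integral_mono_of_nonneg (.of_forall fun x => sq_nonneg _)
          ((integrableOn_const hμs).integrable_indicator hs) (.of_forall hbound)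
    _ = c ^ 2 * μ.real s := by rw [integral_indicator_const _ hs, smul_eq_mul, mul_comm]

end SquareIntegral

section Kernel

variable {H r t ε u : ℝ}

lemma measurable_K (H t : ℝ) : Measurable (K H t) :=
  Measurable.ite (p := fun s => 0 < s ∧ s < t) measurableSet_Ioo (by fun_prop) measurable_const

lemma measurable_dK (H t : ℝ) : Measurable (dK H t) := by
  unfold dK
  fun_prop

lemma K_diffQuotient_sub_dK (hε : 0 < ε) (hu0 : 0 < u) (hut : u < t) :
    (1 / ε) * (K H (t + ε) u - K H t u) - dK H t u
      = √(2 * H) / ε * ((t - u + ε) ^ (H - 1/2) - (t - u) ^ (H - 1/2)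
          - ε * ((H - 1/2) * (t - u) ^ (H - 1/2 - 1))) := by
  rw [K, K, if_pos ⟨hu0, by linarith⟩, if_pos ⟨hu0, hut⟩, dK,
    show H - 1/2 - 1 = H - 3/2 by ring, show t - u + ε = t + ε - u by ring]
  field_simp

lemma abs_K_diffQuotient_sub_dK_le (hH : 1/2 < H) (hH1 : H < 1) (hε : 0 < ε) (hu0 : 0 < u)
    (hur : u ≤ r) (hrt : r < t) :
    |(1 / ε) * (K H (t + ε) u - K H t u) - dK H t u|
      ≤ √(2 * H) * ((H - 1/2) * (3/2 - H) * (t - r) ^ (H - 5/2)) * ε := by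
  have htaylor := abs_rpow_add_sub_rpow_sub_le (m := t - r) (a := t - u) (p := H - 1/2)
    (by linarith) (by linarith) (by linarith) (by linarith) hε.le
  rw [show H - 1/2 - 2 = H - 5/2 by ring, show 1 - (H - 1/2) = 3/2 - H by ring] at htaylor
  rw [K_diffQuotient_sub_dK hε hu0 (by linarith), abs_mul, abs_of_nonneg (by positivity)]
  calc √(2 * H) / ε * |(t - u + ε) ^ (H - 1/2) - (t - u) ^ (H - 1/2)
          - ε * ((H - 1/2) * (t - u) ^ (H - 1/2 - 1))|
      ≤ √(2 * H) / ε * ((H - 1/2) * (3/2 - H) * (t - r) ^ (H - 5/2) * ε ^ 2) := by gcongr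
    _ = √(2 * H) * ((H - 1/2) * (3/2 - H) * (t - r) ^ (H - 5/2)) * ε := by
      field_simp

lemma abs_dK_le (hH : H ≤ 3/2) (hur : u ≤ r) (hrt : r < t) :
    |dK H t u| ≤ √(2 * H) * |H - 1/2| * (t - r) ^ (H - 3/2) := by
  rw [dK, abs_mul, abs_mul, abs_of_nonneg (sqrt_nonneg _),
    abs_of_pos (rpow_pos_of_pos (by linarith : 0 < t - u) _)]
  gcongr ?_ * ?_
  exact rpow_le_rpow_of_nonpos (by linarith) (by linarith) (by linarith)

lemma integral_sq_indicator_dK (hH : 0 ≤ H) (hr : 0 ≤ r) (hrt : r < t) :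
    ∫ u, ((Ioo 0 r).indicator (dK H t) u) ^ 2
      = 2 * H * (H - 1/2) ^ 2 * ∫ u in (0:ℝ)..r, (t - u) ^ (2 * H - 3) := by
  rw [sq_indicator, integral_indicator measurableSet_Ioo, intervalIntegral.integral_of_le hr,
    ← integral_Ioc_eq_integral_Ioo, ← integral_const_mul]
  refine setIntegral_congr_fun measurableSet_Ioc fun u hu => ?_
  rw [dK, mul_pow, mul_pow, sq_sqrt (by linarith), ← rpow_mul_natCast (by linarith [hu.2])]
  ring_nf

noncomputable def nelsonRemainder (H r t ε : ℝ) (u : ℝ) : ℝ :=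
  (1 / ε) * (Ioo 0 r).indicator (fun u => K H (t + ε) u - K H t u) u
    - (Ioo 0 r).indicator (dK H t) u

lemma nelsonRemainder_eq_indicator (H r t ε : ℝ) :
    nelsonRemainder H r t ε
      = (Ioo 0 r).indicator fun u => (1 / ε) * (K H (t + ε) u - K H t u) - dK H t u :=
  funext (indicator_mul_sub_indicator _ _ _ _)

lemma integrable_sq_nelsonRemainder (hH : 1/2 < H) (hH1 : H < 1) (hε : 0 < ε) (hrt : r < t) :
    Integrable fun u => nelsonRemainder H r t ε u ^ 2 := by
  have hmeas : Measurable fun u => (1 / ε) * (K H (t + ε) u - K H t u) - dK H t u :=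
    (((measurable_K H (t + ε)).sub (measurable_K H t)).const_mul _).sub (measurable_dK H t)
  rw [nelsonRemainder_eq_indicator]
  exact integrable_sq_indicator_of_abs_le measurableSet_Ioo measure_Ioo_lt_top.ne
    hmeas.aestronglyMeasurable
    fun u hu => abs_K_diffQuotient_sub_dK_le hH hH1 hε hu.1 hu.2.le hrt

lemma integral_sq_nelsonRemainder_le (hH : 1/2 < H) (hH1 : H < 1) (hε : 0 < ε) (hr : 0 ≤ r)
    (hrt : r < t) :
    ∫ u, nelsonRemainder H r t ε u ^ 2
      ≤ (√(2 * H) * ((H - 1/2) * (3/2 - H) * (t - r) ^ (H - 5/2)) * ε) ^ 2 * r := by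
  rw [nelsonRemainder_eq_indicator]
  simpa [Real.volume_real_Ioo_of_le hr] using
    integral_sq_indicator_le (μ := volume) measurableSet_Ioo measure_Ioo_lt_top.ne
      fun u hu => abs_K_diffQuotient_sub_dK_le hH hH1 hε hu.1 hu.2.le hrt

end Kernel

/-- `I` is the Wiener integral `f ↦ ∫ f dW`, and `hCond` encodes
`E[B_{t+ε} - B_t | F_r] = ∫₀^r (K(t+ε,u) - K(t,u)) dW_u`. -/
theorem stmt12_general {Ω : Type*} {mΩ : MeasurableSpace Ω} (μ : Measure Ω) [IsProbabilityMeasure μ]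
    (H r t : ℝ) (hH : 1/2 < H) (hH1 : H < 1) (hr : 0 < r) (hrt : r < t)
    (ℱ : ℝ → MeasurableSpace Ω)
    (B : ℝ → Ω → ℝ) (I : (ℝ → ℝ) → Ω → ℝ)
    (hLaw : ∀ f : ℝ → ℝ, Integrable (fun u => (f u)^2) →
      Measure.map (I f) μ = ProbabilityTheory.gaussianReal 0
        (Real.toNNReal (∫ u, (f u)^2)))
    (hLin : ∀ (c : ℝ) (f g : ℝ → ℝ),
      I (fun u => c * f u - g u) =ᵐ[μ] fun ω => c * I f ω - I g ω)
    (hCond : ∀ ε > (0:ℝ),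
      μ[fun ω => B (t+ε) ω - B t ω | ℱ r] =ᵐ[μ]
        I (Set.indicator (Set.Ioo 0 r) (fun u => K H (t+ε) u - K H t u))) :
    Filter.Tendsto (fun ε =>
        eLpNorm (fun ω => (1/ε) * ((μ[fun ω' => B (t+ε) ω' - B t ω' | ℱ r]) ω)
          - I (Set.indicator (Set.Ioo 0 r) (fun u => dK H t u)) ω) 2 μ)
      (nhdsWithin 0 (Set.Ioi 0)) (nhds 0) ∧
    Measure.map (I (Set.indicator (Set.Ioo 0 r) (fun u => dK H t u))) μ
      = ProbabilityTheory.gaussianReal 0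
          (Real.toNNReal (2*H*(H - 1/2)^2 * ∫ u in (0:ℝ)..r, (t-u) ^ (2*H-3))) := by
  set C := √(2 * H) * ((H - 1/2) * (3/2 - H) * (t - r) ^ (H - 5/2))
  have hdK : Integrable fun u => ((Ioo 0 r).indicator (dK H t) u) ^ 2 :=
    integrable_sq_indicator_of_abs_le measurableSet_Ioo measure_Ioo_lt_top.ne
      (measurable_dK H t).aestronglyMeasurable fun u hu => abs_dK_le (by linarith) hu.2.le hrt
  have hbound : ∀ ε > 0,
      eLpNorm (fun ω => (1/ε) * ((μ[fun ω' => B (t+ε) ω' - B t ω' | ℱ r]) ω)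
        - I ((Ioo 0 r).indicator (dK H t)) ω) 2 μ ≤ ENNReal.ofReal √((C * ε) ^ 2 * r) := by
    intro ε hε
    rw [eLpNorm_congr_ae (by filter_upwards [hCond ε hε] with ω hω; rw [hω]),
      eLpNorm_mul_sub_eq_of_gaussian hLaw hLin _ (integrable_sq_nelsonRemainder hH hH1 hε hrt)]
    gcongr
    exact integral_sq_nelsonRemainder_le hH hH1 hε hr.le hrt
  have hlim : Tendsto (fun ε => ENNReal.ofReal √((C * ε) ^ 2 * r)) (𝓝[>] 0) (𝓝 0) := by
    have hcont : Continuous fun ε => ENNReal.ofReal √((C * ε) ^ 2 * r) :=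
      ENNReal.continuous_ofReal.comp (by fun_prop)
    simpa using (hcont.tendsto 0).mono_left nhdsWithin_le_nhds
  refine ⟨tendsto_of_tendsto_of_tendsto_of_le_of_le' tendsto_const_nhds hlim
    (.of_forall fun _ => zero_le) (eventually_mem_nhdsWithin.mono hbound), ?_⟩
  rw [hLaw _ hdK, integral_sq_indicator_dK (by linarith) hr.le hrt]

/-- Existence of the Nelson derivative off the diagonal.  `I` is the Wiener-integral map of
the underlying Brownian motion `W` (Gaussian law `hLaw`, a.e.-linearity `hLin`), and
`hCond` encodes `E[B_{t+ε}-B_t | F_r] = ∫₀^r (K(t+ε,u)-K(t,u)) dW_u`.  The conclusion: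
`(1/ε)E[B_{t+ε}-B_t|F_r] → ∫₀^r ∂K/∂t(t,u) dW_u` in `L²(Ω)` as `ε ↓ 0`, and the limit is
centered Gaussian with variance `2H(H-1/2)² ∫₀^r (t-u)^{2H-3} du`. -/
theorem stmt12 {Ω : Type*} {mΩ : MeasurableSpace Ω} (μ : Measure Ω) [IsProbabilityMeasure μ]
    (H r t : ℝ) (hH : 1/2 < H) (hH1 : H < 1) (hr : 0 < r) (hrt : r < t)
    (ℱ : ℝ → MeasurableSpace Ω) (hℱ : ∀ s, ℱ s ≤ mΩ)
    (B : ℝ → Ω → ℝ) (I : (ℝ → ℝ) → Ω → ℝ)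
    (hLaw : ∀ f : ℝ → ℝ, Integrable (fun u => (f u)^2) →
      Measure.map (I f) μ = ProbabilityTheory.gaussianReal 0
        (Real.toNNReal (∫ u, (f u)^2)))
    (hLin : ∀ (c : ℝ) (f g : ℝ → ℝ),
      I (fun u => c * f u - g u) =ᵐ[μ] fun ω => c * I f ω - I g ω)
    (hCond : ∀ ε > (0:ℝ),
      μ[fun ω => B (t+ε) ω - B t ω | ℱ r] =ᵐ[μ]
        I (Set.indicator (Set.Ioo 0 r) (fun u => K H (t+ε) u - K H t u))) :
    Filter.Tendsto (fun ε =>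
        eLpNorm (fun ω => (1/ε) * ((μ[fun ω' => B (t+ε) ω' - B t ω' | ℱ r]) ω)
          - I (Set.indicator (Set.Ioo 0 r) (fun u => dK H t u)) ω) 2 μ)
      (nhdsWithin 0 (Set.Ioi 0)) (nhds 0) ∧
    Measure.map (I (Set.indicator (Set.Ioo 0 r) (fun u => dK H t u))) μ
      = ProbabilityTheory.gaussianReal 0
          (Real.toNNReal (2*H*(H - 1/2)^2 * ∫ u in (0:ℝ)..r, (t-u) ^ (2*H-3))) :=
  stmt12_general (mΩ := mΩ) μ H r t hH hH1 hr hrt ℱ B I hLaw hLin hCond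
end
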